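/- arXiv:1603.04813 — 8 statements merged into one kernel-verified Lean document; each statement's English description precedes it below -/
import Mathlib

section
/- Let K be a field, n > 1, and a ∈ K[s]^n a nonzero row vector. Suppose u_1,...,u_{n-1} are nonzero elements of syz(a) that generate syz(a) as a K[s]-module and whose leading vectors LV(u_1),...,LV(u_{n-1}) are linearly independent over K. Then deg(u_1) + ... + deg(u_{n-1}) = deg(a) − deg(gcd(a)). -/
open Polynomial
open scoped Classical

noncomputable section

/-- The degree of a polynomial vector: the maximum of the degrees of the entries. -/
def vdeg {K : Type*} [Field K] {n : ℕ} (h : Fin n → K[X]) : ℕ :=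
  Finset.univ.sup fun i => (h i).natDegree

/-- The leading vector of a polynomial vector: the vector of coefficients of
`s ^ (vdeg h)` in the entries. -/
def LV {K : Type*} [Field K] {n : ℕ} (h : Fin n → K[X]) : Fin n → K :=
  fun i => (h i).coeff (vdeg h)

/-- The syzygy module of a row vector `a` of polynomials. -/
def syz {K : Type*} [Field K] {n : ℕ} (a : Fin n → K[X]) :
    Submodule K[X] (Fin n → K[X]) where
  carrier := {h | ∑ i, a i * h i = 0}
  add_mem' := by
    intro x y hx hy
    simp only [Set.mem_setOf_eq] at *
    simp only [Pi.add_apply, mul_add, Finset.sum_add_distrib, hx, hy, add_zero]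
  zero_mem' := by simp
  smul_mem' := by
    intro c x hx
    simp only [Set.mem_setOf_eq] at *
    have h1 : ∑ i, a i * (c • x) i = c * ∑ i, a i * x i := by
      rw [Finset.mul_sum]
      refine Finset.sum_congr rfl fun i _ => ?_
      simp only [Pi.smul_apply, smul_eq_mul]
      ring
    rw [h1, hx, mul_zero]

/-- The coefficient matrix `A ∈ K^{(2d+1) × n(d+1)}` associated with a polynomial row
vector `a` of degree at most `d`:  `A_{k+1, i+jn} = c_{k-j,i}` where `c_m` is the vector of
coefficients of `s^m` in `a` (with `c_m = 0` for `m < 0` or `m > d`). -/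
def coefA {K : Type*} [Field K] {n : ℕ} (d : ℕ) (hn : 0 < n) (a : Fin n → K[X]) :
    Matrix (Fin (2*d+1)) (Fin (n*(d+1))) K :=
  Matrix.of fun k ℓ =>
    if (ℓ : ℕ) / n ≤ (k : ℕ) then
      (a ⟨(ℓ : ℕ) % n, Nat.mod_lt _ hn⟩).coeff ((k : ℕ) - (ℓ : ℕ) / n)
    else 0

/-- The `♭` isomorphism `K^{n(d+1)} → K[s]^n`: split `v` into `d+1` consecutive blocks
`w_0, …, w_d ∈ K^n` and form `∑_j s^j w_j`. -/
def flatv {K : Type*} [Field K] {n : ℕ} (d : ℕ) (v : Fin (n*(d+1)) → K) : Fin n → K[X] :=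
  fun i => ∑ j : Fin (d+1), C (v ⟨(i:ℕ) + (j:ℕ)*n, by
    calc (i:ℕ) + (j:ℕ)*n < n + (j:ℕ)*n := Nat.add_lt_add_right i.isLt _
      _ = n * ((j:ℕ)+1) := by ring
      _ ≤ n * (d+1) := Nat.mul_le_mul le_rfl j.isLt⟩) * X ^ (j:ℕ)

/-- The `♭` isomorphism `K^m → K[s]` for scalars. -/
def flat1 {K : Type*} [Field K] {m : ℕ} (w : Fin m → K) : K[X] :=
  ∑ k : Fin m, C (w k) * X ^ (k:ℕ)

/-- A column index `j` of a matrix is pivotal if the `j`-th column is not a `K`-linear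
combination of the columns of smaller index. -/
def Pivotal {K : Type*} [Field K] {m N : ℕ} (A : Matrix (Fin m) (Fin N) K) (j : Fin N) : Prop :=
  (fun k => A k j) ∉ Submodule.span K ((fun r : Fin N => fun k => A k r) '' {r | r < j})

/-- A basic non-pivotal index: the minimal non-pivotal index in its residue class modulo `n`. -/
def BasicNP {K : Type*} [Field K] {m N : ℕ} (n : ℕ) (A : Matrix (Fin m) (Fin N) K)
    (r : Fin N) : Prop :=
  ¬ Pivotal A r ∧ ∀ r' : Fin N, ¬ Pivotal A r' → (r':ℕ) % n = (r:ℕ) % n → r ≤ r'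

/-- `B` encodes, for each non-pivotal index `i`, the row-echelon null vector
`b_i = e_i − v_i`: `(b_i)_i = 1`, `(b_i)_j = −α_j` for pivotal `j < i` where
`A_{*i} = Σ α_j A_{*j}`, and all other entries vanish.  Equivalently, `b_i ∈ ker A`,
`(b_i)_i = 1` and `(b_i)_j = 0` unless `j = i` or `j` is pivotal with `j < i`. -/
def IsEchelonNull {K : Type*} [Field K] {m N : ℕ} (A : Matrix (Fin m) (Fin N) K)
    (B : Fin N → Fin N → K) : Prop :=
  ∀ i : Fin N, ¬ Pivotal A i →
    A.mulVec (B i) = 0 ∧ B i i = 1 ∧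
    ∀ j : Fin N, j ≠ i → ¬ (Pivotal A j ∧ j < i) → B i j = 0

/-- Shift an index by `t`, modulo the size (used only when `j + t` is in range). -/
def shiftIdx {N : ℕ} (j : Fin N) (t : ℕ) : Fin N :=
  ⟨((j:ℕ) + t) % N, Nat.mod_lt _ j.pos⟩
lemma my_natDegree_le_of_mem_degreeLT {K : Type*} [Field K] {m : ℕ} {p : K[X]}
    (hp : p ∈ degreeLT K (m+1)) : p.natDegree ≤ m := by
  by_cases h0 : p = 0
  · simp [h0]
  · have := mem_degreeLT.mp hp
    rw [← natDegree_lt_iff_degree_lt h0] at this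
    omega

lemma my_mem_degreeLT_of_natDegree_le {K : Type*} [Field K] {m : ℕ} {p : K[X]}
    (hp : p.natDegree ≤ m) : p ∈ degreeLT K (m+1) := by
  rw [mem_degreeLT]
  calc p.degree ≤ (p.natDegree : WithBot ℕ) := degree_le_natDegree
    _ < ((m+1 : ℕ) : WithBot ℕ) := by exact_mod_cast Nat.lt_succ_of_le hp

lemma my_coeff_mul_top {K : Type*} [Field K] (p q : K[X]) (e m : ℕ)
    (hq : q.natDegree ≤ e) (hp : p.natDegree + e ≤ m) :
    (p * q).coeff m = p.coeff (m - e) * q.coeff e := by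
  rw [coeff_mul]
  rw [Finset.sum_eq_single_of_mem (m - e, e) (Finset.HasAntidiagonal.mem_antidiagonal.mpr (by omega))]
  rintro ⟨x1, x2⟩ hx hne
  have hxm : x1 + x2 = m := Finset.HasAntidiagonal.mem_antidiagonal.mp hx
  rcases lt_trichotomy x2 e with h | h | h
  · have h1 : p.natDegree < x1 := by omega
    simp [coeff_eq_zero_of_natDegree_lt h1]
  · exfalso
    apply hne
    have h1 : x1 = m - e := by omega
    rw [h1, h]
  · simp [coeff_eq_zero_of_natDegree_lt (lt_of_le_of_lt hq h)]

lemma my_top_coeff {K : Type*} [Field K] {n N : ℕ} (u : Fin N → Fin n → K[X])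
    (p : Fin N → K[X]) (m : ℕ)
    (hm : ∀ i, p i ≠ 0 → (p i).natDegree + vdeg (u i) ≤ m) (j : Fin n) :
    ((∑ i, p i • u i) j).coeff m = ∑ i, (p i).coeff (m - vdeg (u i)) * LV (u i) j := by
  rw [Finset.sum_apply, finset_sum_coeff]
  refine Finset.sum_congr rfl fun i _ => ?_
  simp only [Pi.smul_apply, smul_eq_mul]
  by_cases hp : p i = 0
  · simp [hp]
  · exact my_coeff_mul_top _ _ _ _
      (Finset.le_sup (f := fun j => (u i j).natDegree) (Finset.mem_univ j)) (hm i hp)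

lemma my_lv_zero {K : Type*} [Field K] {n N : ℕ} (u : Fin N → Fin n → K[X])
    (p : Fin N → K[X]) (m : ℕ)
    (hm : ∀ i, p i ≠ 0 → (p i).natDegree + vdeg (u i) ≤ m)
    (hz : ∀ j, ((∑ i, p i • u i) j).coeff m = 0) :
    ∑ i, ((p i).coeff (m - vdeg (u i))) • LV (u i) = 0 := by
  funext j
  rw [Finset.sum_apply]
  simp only [Pi.smul_apply, smul_eq_mul, Pi.zero_apply]
  rw [← my_top_coeff u p m hm j]
  exact hz j

lemma my_deg_bound {K : Type*} [Field K] {n N : ℕ} (u : Fin N → Fin n → K[X])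
    (hLV : LinearIndependent K fun i => LV (u i)) (p : Fin N → K[X]) (m : ℕ)
    (hz : ∀ j k, m < k → ((∑ i, p i • u i) j).coeff k = 0) :
    ∀ i, p i ≠ 0 → (p i).natDegree + vdeg (u i) ≤ m := by
  by_contra hcon
  push_neg at hcon
  obtain ⟨i₀, hi₀ne, hi₀⟩ := hcon
  set T : Finset (Fin N) := Finset.univ.filter (fun i => p i ≠ 0) with hT
  have hi₀T : i₀ ∈ T := by simp [hT, hi₀ne]
  set f : Fin N → ℕ := fun i => (p i).natDegree + vdeg (u i) with hf
  set M := T.sup f with hM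
  have hi₀' : m < f i₀ := hi₀
  have hmM : m < M := lt_of_lt_of_le hi₀' (Finset.le_sup (f := f) hi₀T)
  have hall : ∀ i, p i ≠ 0 → f i ≤ M := fun i hi => Finset.le_sup (f := f) (by simp [hT, hi])
  have hzero := Fintype.linearIndependent_iff.mp hLV _
    (my_lv_zero u p M hall (fun j => hz j M hmM))
  obtain ⟨i₁, hi₁T, hi₁⟩ := Finset.exists_mem_eq_sup T ⟨i₀, hi₀T⟩ f
  have hp1 : p i₁ ≠ 0 := by
    have := Finset.mem_filter.mp hi₁T
    exact this.2
  apply leadingCoeff_ne_zero.mpr hp1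
  have hMi : M = (p i₁).natDegree + vdeg (u i₁) := hi₁
  have hsub : M - vdeg (u i₁) = (p i₁).natDegree := by omega
  rw [leadingCoeff, ← hsub]
  exact hzero i₁

lemma my_sum_eq_zero {K : Type*} [Field K] {n N : ℕ} (u : Fin N → Fin n → K[X])
    (hLV : LinearIndependent K fun i => LV (u i)) (p : Fin N → K[X])
    (hp : ∑ i, p i • u i = 0) : ∀ i, p i = 0 := by
  have hz : ∀ j k, ((∑ i, p i • u i) j).coeff k = 0 := by
    intro j k; rw [hp]; simp
  have hb := my_deg_bound u hLV p 0 (fun j k _ => hz j k)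
  have hzero := Fintype.linearIndependent_iff.mp hLV _
    (my_lv_zero u p 0 hb (fun j => hz j 0))
  intro i
  by_cases hi : p i = 0
  · exact hi
  · have h1 := hb i hi
    have hnd : (p i).natDegree = 0 := by omega
    have hco := hzero i
    rw [Nat.zero_sub] at hco
    rw [eq_C_of_natDegree_eq_zero hnd, hco, map_zero]

lemma my_descent {K : Type*} [Field K] {n : ℕ} (a : Fin n → K[X]) (g : K[X]) (hg0 : g ≠ 0)
    (b : Fin n → K[X]) (hb : ∑ i, a i * b i = g)
    (j₀ : Fin n) (β : K[X]) (hβ : a j₀ = g * β) (hβ0 : β ≠ 0)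
    (E : ℕ) (hE : ∀ i, (b i).natDegree ≤ E) :
    ∀ m : ℕ, ∀ q : K[X], q.natDegree ≤ m →
      ∃ h : Fin n → K[X], (∑ i, a i * h i = g * q) ∧
        ∀ i, (h i).natDegree ≤ max (m + g.natDegree - (a j₀).natDegree) (E + (a j₀).natDegree) := by
  have hD : (a j₀).natDegree = g.natDegree + β.natDegree := by
    rw [hβ, natDegree_mul hg0 hβ0]
  intro m
  induction m using Nat.strong_induction_on with
  | _ m IH =>
    intro q hq
    by_cases hq0 : q = 0
    · exact ⟨0, by simp [hq0], by simp⟩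
    by_cases hsmall : q.natDegree + g.natDegree < (a j₀).natDegree
    · refine ⟨fun i => b i * q, ?_, fun i => ?_⟩
      · calc ∑ i, a i * (b i * q) = (∑ i, a i * b i) * q := by
              rw [Finset.sum_mul]; exact Finset.sum_congr rfl fun i _ => (mul_assoc _ _ _).symm
          _ = g * q := by rw [hb]
      · calc (b i * q).natDegree ≤ (b i).natDegree + q.natDegree := natDegree_mul_le
          _ ≤ E + (a j₀).natDegree := by have := hE i; omega
          _ ≤ _ := le_max_right _ _
    · push_neg at hsmall
      set k := q.natDegree + g.natDegree - (a j₀).natDegree with hk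
      set c := q.leadingCoeff / β.leadingCoeff with hc
      have hc0 : c ≠ 0 := div_ne_zero (leadingCoeff_ne_zero.mpr hq0) (leadingCoeff_ne_zero.mpr hβ0)
      have hkd : k + β.natDegree = q.natDegree := by omega
      set r := C c * X ^ k * β with hr
      have hCX0 : (C c * X ^ k : K[X]) ≠ 0 :=
        mul_ne_zero (fun hcc => hc0 (C_eq_zero.mp hcc)) (pow_ne_zero _ X_ne_zero)
      have hr0 : r ≠ 0 := mul_ne_zero hCX0 hβ0
      have hrd : r.natDegree = q.natDegree := by
        rw [hr, natDegree_mul hCX0 hβ0, natDegree_C_mul_X_pow _ _ hc0]; exact hkd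
      have hrlc : r.leadingCoeff = q.leadingCoeff := by
        rw [hr, leadingCoeff_mul, leadingCoeff_mul, leadingCoeff_C, leadingCoeff_X_pow, mul_one, hc]
        exact div_mul_cancel₀ _ (leadingCoeff_ne_zero.mpr hβ0)
      have hkm : k ≤ m + g.natDegree - (a j₀).natDegree := by omega
      have hsingle : ∑ i, a i * (if i = j₀ then C c * X ^ k else 0) = g * r := by
        rw [Finset.sum_eq_single j₀]
        · rw [if_pos rfl, hβ, hr]; ring
        · intro i _ hi; rw [if_neg hi, mul_zero]
        · intro hmem; exact absurd (Finset.mem_univ j₀) hmem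
      by_cases hq'0 : q - r = 0
      · refine ⟨fun i => if i = j₀ then C c * X ^ k else 0, ?_, fun i => ?_⟩
        · have hqr : q = r := by rwa [sub_eq_zero] at hq'0
          rw [hsingle, hqr]
        · rcases eq_or_ne i j₀ with rfl | hne
          · simp only [eq_self_iff_true, if_true]
            rw [natDegree_C_mul_X_pow _ _ hc0]
            exact le_trans hkm (le_max_left _ _)
          · simp [hne]
      · have hdlt : (q - r).natDegree < q.natDegree := by
          have hdeg : r.degree = q.degree := by
            rw [degree_eq_natDegree hr0, degree_eq_natDegree hq0, hrd]
          have h2 := degree_sub_lt hdeg.symm hq0 hrlc.symm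
          exact natDegree_lt_natDegree hq'0 h2
        have hlt : (q - r).natDegree < m := lt_of_lt_of_le hdlt hq
        obtain ⟨h', hh's, hh'd⟩ := IH (q - r).natDegree hlt (q - r) le_rfl
        refine ⟨fun i => h' i + if i = j₀ then C c * X ^ k else 0, ?_, fun i => ?_⟩
        · have : ∑ i, a i * (h' i + if i = j₀ then C c * X ^ k else 0)
              = (∑ i, a i * h' i) + ∑ i, a i * (if i = j₀ then C c * X ^ k else 0) := by
            rw [← Finset.sum_add_distrib]
            exact Finset.sum_congr rfl fun i _ => mul_add _ _ _
          rw [this, hh's, hsingle]; ring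
        · apply le_trans (natDegree_add_le _ _)
          apply max_le
          · refine le_trans (hh'd i) (max_le ?_ (le_max_right _ _))
            have h3 : (q - r).natDegree + g.natDegree - (a j₀).natDegree
                ≤ m + g.natDegree - (a j₀).natDegree := by omega
            exact le_trans h3 (le_max_left _ _)
          · rcases eq_or_ne i j₀ with rfl | hne
            · simp only [eq_self_iff_true, if_true]
              rw [natDegree_C_mul_X_pow _ _ hc0]
              exact le_trans hkm (le_max_left _ _)
            · simp [hne]

/-- sum of the degrees.  If `u_1, …, u_{n-1}` are nonzero syzygies of a
nonzero row vector `a ∈ K[s]^n` that generate `syz a` over `K[s]` and whose leading vectors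
are `K`-linearly independent, then `Σ deg u_i = deg a − deg (gcd a)`.  Here `g` is the monic
greatest common divisor of the entries of `a`. -/
theorem sum_of_degrees_of_mu_basis {K : Type*} [Field K] {n : ℕ} (hn : 1 < n)
    (a : Fin n → K[X]) (ha : a ≠ 0)
    (g : K[X]) (hg : g.Monic) (hgdvd : ∀ i, g ∣ a i)
    (hgmax : ∀ c : K[X], (∀ i, c ∣ a i) → c ∣ g)
    (u : Fin (n-1) → Fin n → K[X]) (hu0 : ∀ i, u i ≠ 0)
    (humem : ∀ i, u i ∈ syz a)
    (hspan : Submodule.span K[X] (Set.range u) = syz a)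
    (hLV : LinearIndependent K fun i => LV (u i)) :
    ∑ i, vdeg (u i) = vdeg a - g.natDegree := by
  classical
  have hg0 : g ≠ 0 := hg.ne_zero
  have hDle : ∀ j, (a j).natDegree ≤ vdeg a := fun j => Finset.le_sup (f := fun i => (a i).natDegree) (Finset.mem_univ j)
  -- an index of maximal degree with nonzero entry
  obtain ⟨j₀, haj₀, hdegj₀⟩ : ∃ j, a j ≠ 0 ∧ (a j).natDegree = vdeg a := by
    obtain ⟨j, -, hj⟩ := Finset.exists_mem_eq_sup (Finset.univ : Finset (Fin n))
      ⟨⟨0, by omega⟩, Finset.mem_univ _⟩ (fun i => (a i).natDegree)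
    obtain ⟨j', hj'⟩ : ∃ j', a j' ≠ 0 := by
      by_contra hcon; push_neg at hcon; exact ha (funext hcon)
    by_cases h0 : a j = 0
    · have hD0 : vdeg a = 0 := by rw [vdeg, hj, h0, natDegree_zero]
      exact ⟨j', hj', le_antisymm (hD0 ▸ hDle j') (by omega)⟩
    · exact ⟨j, h0, hj.symm⟩
  have hγD : g.natDegree ≤ vdeg a := hdegj₀ ▸ natDegree_le_of_dvd (hgdvd j₀) haj₀
  obtain ⟨e, he⟩ : ∃ e, vdeg a = g.natDegree + e := ⟨vdeg a - g.natDegree, by omega⟩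
  obtain ⟨β, hβ⟩ := hgdvd j₀
  have hβ0 : β ≠ 0 := by rintro rfl; rw [mul_zero] at hβ; exact haj₀ hβ
  -- Bezout identity
  obtain ⟨b, hb⟩ : ∃ b : Fin n → K[X], ∑ i, a i * b i = g := by
    obtain ⟨g₀, hg₀⟩ := (IsPrincipalIdealRing.principal (Ideal.span (Set.range a))).principal
    have hdvd : ∀ i, g₀ ∣ a i := by
      intro i
      have : a i ∈ Ideal.span (Set.range a) := Ideal.subset_span (Set.mem_range_self i)
      rw [hg₀] at this
      exact Ideal.mem_span_singleton.mp this
    have hgmem : g ∈ Ideal.span (Set.range a) := by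
      rw [hg₀]
      exact Ideal.mem_span_singleton.mpr (hgmax g₀ hdvd)
    obtain ⟨c, hc⟩ := (Submodule.mem_span_range_iff_exists_fun K[X]).mp hgmem
    exact ⟨c, by rw [← hc]; exact Finset.sum_congr rfl fun i _ => by rw [smul_eq_mul]; ring⟩
  set E := Finset.univ.sup (fun i => (b i).natDegree) with hE
  have hEb : ∀ i, (b i).natDegree ≤ E := fun i => Finset.le_sup (f := fun i => (b i).natDegree) (Finset.mem_univ i)
  set d := (Finset.univ.sup fun i => vdeg (u i)) + E + vdeg a + 1 with hd
  have hδd : ∀ i, vdeg (u i) ≤ d := fun i =>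
    le_trans (Finset.le_sup (f := fun i => vdeg (u i)) (Finset.mem_univ i)) (by omega)
  have hEDd : E + vdeg a ≤ d := by omega
  -- the linear maps
  haveI instFD : FiniteDimensional K (degreeLT K (d+1)) :=
    Module.Finite.equiv (degreeLTEquiv K (d+1)).symm
  let ι : (Fin n → degreeLT K (d+1)) →ₗ[K] (Fin n → K[X]) :=
    LinearMap.pi fun i => (degreeLT K (d+1)).subtype.comp (LinearMap.proj i)
  have hι : Function.Injective ι := by
    intro w w' hww
    funext i
    exact Subtype.ext (congrFun hww i)
  let L : (Fin n → K[X]) →ₗ[K] K[X] :=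
    ∑ i, (LinearMap.mulLeft K (a i)).comp (LinearMap.proj i)
  have hL : ∀ h, L h = ∑ i, a i * h i := by
    intro h
    simp [L, LinearMap.sum_apply, LinearMap.mulLeft_apply]
  set Φ := L.comp ι with hΦdef
  have hΦ : ∀ w, Φ w = ∑ i, a i * ((w i : K[X])) := by
    intro w
    rw [hΦdef, LinearMap.comp_apply, hL]
    exact Finset.sum_congr rfl fun i _ => rfl
  have hιval : ∀ w i, ι w i = (w i : K[X]) := fun w i => rfl
  -- finrank of degreeLT
  have hfrLT : ∀ m : ℕ, Module.finrank K (degreeLT K m) = m := by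
    intro m
    rw [(degreeLTEquiv K m).finrank_eq, Module.finrank_pi]
    simp
  -- domain dimension
  have hWdim : Module.finrank K (Fin n → degreeLT K (d+1)) = n * (d+1) := by
    rw [Module.finrank_pi_fintype]
    simp [hfrLT, Finset.sum_const, mul_comm]
  -- range computation
  set mulg : K[X] →ₗ[K] K[X] := LinearMap.mulLeft K g with hmulg
  have hmulg_inj : Function.Injective mulg := fun x y hxy => by
    simp only [hmulg, LinearMap.mulLeft_apply] at hxy
    exact mul_left_cancel₀ hg0 hxy
  have hrange : LinearMap.range Φ = (degreeLT K (d+1+e)).map mulg := by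
    apply le_antisymm
    · rintro x ⟨w, rfl⟩
      choose cdiv hcdiv using hgdvd
      refine ⟨∑ i, cdiv i * (w i : K[X]), ?_, ?_⟩
      · have hdeg : ∀ i, (cdiv i * (w i : K[X])).natDegree ≤ e + d := by
          intro i
          by_cases hci : cdiv i = 0
          · simp [hci]
          calc (cdiv i * (w i : K[X])).natDegree
              ≤ (cdiv i).natDegree + ((w i : K[X])).natDegree := natDegree_mul_le
            _ ≤ e + d := by
              have h1 : (cdiv i).natDegree ≤ e := by
                by_cases hai : a i = 0
                · have h0 : g * cdiv i = 0 := by rw [← hcdiv i, hai]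
                  exact absurd ((mul_eq_zero.mp h0).resolve_left hg0) hci
                have := hcdiv i
                have h2 : (a i).natDegree = g.natDegree + (cdiv i).natDegree := by
                  rw [this, natDegree_mul hg0 hci]
                have := hDle i
                omega
              have h3 : ((w i : K[X])).natDegree ≤ d := my_natDegree_le_of_mem_degreeLT (w i).2
              omega
        apply mem_degreeLT.mpr
        calc (∑ i, cdiv i * (w i : K[X])).degree
            ≤ ((∑ i, cdiv i * (w i : K[X])).natDegree : WithBot ℕ) := degree_le_natDegree
          _ < ((d+1+e : ℕ) : WithBot ℕ) := by
            have := natDegree_sum_le Finset.univ (fun i => cdiv i * (w i : K[X]))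
            rw [Nat.cast_lt]
            have h4 : (∑ i, cdiv i * (w i : K[X])).natDegree ≤ e + d := by
              refine le_trans this ?_
              simp only [Finset.fold_max_le]
              exact ⟨by omega, fun i _ => hdeg i⟩
            omega
      · rw [hΦ w]
        simp only [hmulg, LinearMap.mulLeft_apply, Finset.mul_sum]
        exact Finset.sum_congr rfl fun i _ => by rw [hcdiv i]; ring
    · rintro x ⟨q, hq, rfl⟩
      have hqd : q.natDegree ≤ d + e := by
        have := my_natDegree_le_of_mem_degreeLT (by rwa [show d+1+e = (d+e)+1 by ring] at hq)
        exact this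
      obtain ⟨h, hhsum, hhdeg⟩ := my_descent a g hg0 b hb j₀ β hβ hβ0 E hEb (d+e) q hqd
      have hhd : ∀ i, (h i).natDegree ≤ d := by
        intro i
        refine le_trans (hhdeg i) (max_le ?_ ?_) <;> rw [hdegj₀] <;> omega
      refine ⟨fun i => ⟨h i, my_mem_degreeLT_of_natDegree_le (hhd i)⟩, ?_⟩
      rw [hΦ]
      simpa [hmulg] using hhsum
  have hrangedim : Module.finrank K (LinearMap.range Φ) = d+1+e := by
    rw [hrange, ← (Submodule.equivMapOfInjective mulg hmulg_inj (degreeLT K (d+1+e))).finrank_eq,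
      hfrLT]
  -- the kernel
  set v : ((i : Fin (n-1)) × Fin (d+1 - vdeg (u i))) → (Fin n → K[X]) :=
    fun ik => (X^(ik.2 : ℕ) : K[X]) • u ik.1 with hv
  have hvLI : LinearIndependent K v := by
    rw [Fintype.linearIndependent_iff]
    intro cc hcc
    set p : Fin (n-1) → K[X] :=
      fun i => ∑ k : Fin (d+1 - vdeg (u i)), C (cc ⟨i, k⟩) * X^(k:ℕ) with hp
    have hsum : ∑ i, p i • u i = 0 := by
      rw [← hcc, ← Finset.univ_sigma_univ, Finset.sum_sigma]
      refine Finset.sum_congr rfl fun i _ => ?_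
      simp only [hp]
      rw [Finset.sum_smul]
      refine Finset.sum_congr rfl fun k _ => ?_
      rw [mul_smul, ← Polynomial.algebraMap_eq, algebraMap_smul]
    have hp0 := my_sum_eq_zero u hLV p hsum
    rintro ⟨i, k⟩
    have hco : (p i).coeff (k : ℕ) = cc ⟨i, k⟩ := by
      simp only [hp]
      rw [finset_sum_coeff]
      rw [Finset.sum_eq_single_of_mem k (Finset.mem_univ k)]
      · rw [coeff_C_mul, coeff_X_pow, if_pos rfl, mul_one]
      · intro k' _ hk'
        have hne : (k' : ℕ) ≠ (k : ℕ) := fun hkk => hk' (Fin.ext hkk)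
        simp only [coeff_C_mul, coeff_X_pow]
        rw [if_neg (fun hkk : (k:ℕ) = (k':ℕ) => hne hkk.symm), mul_zero]
    rw [hp0 i] at hco
    simpa using hco.symm
  have hker : (LinearMap.ker Φ).map ι = Submodule.span K (Set.range v) := by
    apply le_antisymm
    · rintro x ⟨w, hw, rfl⟩
      simp only [SetLike.mem_coe, LinearMap.mem_ker] at hw
      have hmem : ι w ∈ syz a := by
        show ∑ i, a i * (ι w) i = 0
        rw [← hw]
        exact (hΦ w).symm
      rw [← hspan] at hmem
      obtain ⟨p, hpsum⟩ := (Submodule.mem_span_range_iff_exists_fun K[X]).mp hmem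
      have hcoefzero : ∀ j k, d < k → ((∑ i, p i • u i) j).coeff k = 0 := by
        intro j k hk
        rw [hpsum]
        have h1 : ((ι w) j).natDegree ≤ d := my_natDegree_le_of_mem_degreeLT (w j).2
        exact coeff_eq_zero_of_natDegree_lt (lt_of_le_of_lt h1 hk)
      have hbd := my_deg_bound u hLV p d hcoefzero
      rw [← hpsum]
      apply Submodule.sum_mem
      intro i _
      by_cases hpi : p i = 0
      · simp [hpi]
      · have hdi : (p i).natDegree < d + 1 - vdeg (u i) := by
          have h1 := hbd i hpi
          have h2 := hδd i
          omega
        rw [(p i).as_sum_range' _ hdi, Finset.sum_smul]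
        apply Submodule.sum_mem
        intro k hk
        have hk' : k < d + 1 - vdeg (u i) := Finset.mem_range.mp hk
        have heq : (monomial k ((p i).coeff k)) • u i
            = ((p i).coeff k) • v ⟨i, ⟨k, hk'⟩⟩ := by
          simp only [hv]
          rw [← C_mul_X_pow_eq_monomial, mul_smul, ← Polynomial.algebraMap_eq, algebraMap_smul]
        rw [heq]
        exact Submodule.smul_mem _ _ (Submodule.subset_span ⟨⟨i, ⟨k, hk'⟩⟩, rfl⟩)
    · rw [Submodule.span_le]
      rintro x ⟨⟨i, k⟩, rfl⟩
      have hdeg : ∀ j, ((X^(k:ℕ) : K[X]) * u i j).natDegree ≤ d := by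
        intro j
        have h1 : (u i j).natDegree ≤ vdeg (u i) :=
          Finset.le_sup (f := fun j => (u i j).natDegree) (Finset.mem_univ j)
        have h2 : (k : ℕ) < d + 1 - vdeg (u i) := k.isLt
        calc ((X^(k:ℕ) : K[X]) * u i j).natDegree
            ≤ (X^(k:ℕ) : K[X]).natDegree + (u i j).natDegree := natDegree_mul_le
          _ ≤ d := by rw [natDegree_X_pow]; omega
      refine ⟨fun j => ⟨(X^(k:ℕ) : K[X]) * u i j, my_mem_degreeLT_of_natDegree_le (hdeg j)⟩, ?_, ?_⟩
      · simp only [SetLike.mem_coe, LinearMap.mem_ker]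
        rw [hΦ]
        have hsyz : ∑ j, a j * u i j = 0 := humem i
        calc ∑ j, a j * ((X^(k:ℕ) : K[X]) * u i j)
            = X^(k:ℕ) * ∑ j, a j * u i j := by
              rw [Finset.mul_sum]; exact Finset.sum_congr rfl fun j _ => by ring
          _ = 0 := by rw [hsyz, mul_zero]
      · funext j
        rfl
  have hkerdim : Module.finrank K (LinearMap.ker Φ) = ∑ i, (d + 1 - vdeg (u i)) := by
    rw [(Submodule.equivMapOfInjective ι hι (LinearMap.ker Φ)).finrank_eq, hker,
      finrank_span_eq_card hvLI]
    simp [Fintype.card_sigma]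
  have hrn := LinearMap.finrank_range_add_finrank_ker Φ
  rw [hrangedim, hkerdim, hWdim] at hrn
  have hsum1 : ∑ i : Fin (n-1), (d + 1 - vdeg (u i)) + ∑ i, vdeg (u i) = (n-1) * (d+1) := by
    have h1 : ∀ i ∈ Finset.univ, (d + 1 - vdeg (u i)) + vdeg (u i) = d+1 := fun i _ => by
      have := hδd i; omega
    rw [← Finset.sum_add_distrib, Finset.sum_congr rfl h1, Finset.sum_const, Finset.card_univ,
      Fintype.card_fin, smul_eq_mul]
  have hn1 : (n-1) * (d+1) + (d+1) = n * (d+1) := by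
    have h1 : n - 1 + 1 = n := by omega
    calc (n-1)*(d+1) + (d+1) = ((n-1)+1) * (d+1) := by ring
      _ = n * (d+1) := by rw [h1]
  obtain ⟨P1, hP1⟩ : ∃ P1, (n-1)*(d+1) = P1 := ⟨_, rfl⟩
  obtain ⟨P2, hP2⟩ : ∃ P2, n*(d+1) = P2 := ⟨_, rfl⟩
  rw [hP1] at hsum1
  rw [hP2] at hrn
  rw [hP1, hP2] at hn1
  omega
end
end

section
/- Let K be a field, n > 1, and a ∈ K[s]^n a nonzero row vector. Suppose u_1,...,u_{n-1} are nonzero elements of syz(a) with deg(u_1) ≤ ... ≤ deg(u_{n-1}) that generate syz(a) as a K[s]-module and whose leading vectors LV(u_1),...,LV(u_{n-1}) are linearly independent over K. Then for any nonzero h_1,...,h_{n-1} ∈ syz(a) with deg(h_1) ≤ ... ≤ deg(h_{n-1}) that generate syz(a) as a K[s]-module, one has deg(u_i) ≤ deg(h_i) for each i = 1,...,n−1. -/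
open Polynomial
open scoped Classical

noncomputable section

/-!
If the leading vectors of `u₁, …, uₘ` are linearly independent over `K`, the top-degree
coefficient of `∑ pₖ uₖ` is a nontrivial `K`-combination of the `LV uₖ`, so
`deg (∑ pₖ uₖ) = max_{pₖ ≠ 0} (deg pₖ + deg uₖ)` (the predictable degree property).
Hence such `u` are linearly independent over `K[s]`, and an element of their span of degree
`< deg uᵢ` is a combination of `u₁, …, u_{i-1}` alone. If `deg hᵢ < deg uᵢ`, then
`h₁, …, hᵢ` all lie in the span of `u₁, …, u_{i-1}`, so the `n - 2` vectors
`u₁, …, u_{i-1}, h_{i+1}, …, h_{n-1}` span `syz a`, which contains the `n - 1` independent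
vectors `uⱼ`.
-/

theorem card_le_of_linearIndependent_of_range_subset_span {R M ι κ : Type*} [Ring R]
    [StrongRankCondition R] [AddCommGroup M] [Module R M] [Fintype ι] [Fintype κ]
    {v : ι → M} (hv : LinearIndependent R v) {w : κ → M}
    (hvw : Set.range v ⊆ Submodule.span R (Set.range w)) :
    Fintype.card ι ≤ Fintype.card κ :=
  (linearIndependent_le_span_aux' v hv _ hvw).trans (Fintype.card_range_le w)

section LeadingVectors

variable {K ι : Type*} [Field K] [Fintype ι] {n : ℕ}

theorem natDegree_le_vdeg (g : Fin n → K[X]) (i : Fin n) : (g i).natDegree ≤ vdeg g :=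
  Finset.le_sup (f := fun i => (g i).natDegree) (Finset.mem_univ i)

theorem coeff_mul_apply_of_natDegree_add_vdeg_le {q : K[X]} {v : Fin n → K[X]} {D : ℕ}
    (hD : q.natDegree + vdeg v ≤ D) (idx : Fin n) :
    (q * v idx).coeff D =
      if q.natDegree + vdeg v = D then q.leadingCoeff * LV v idx else 0 := by
  split_ifs with heq
  · subst heq
    exact coeff_mul_add_eq_of_natDegree_le le_rfl (natDegree_le_vdeg v idx)
  · refine coeff_eq_zero_of_natDegree_lt (natDegree_mul_le.trans_lt ?_)
    have := natDegree_le_vdeg v idx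
    omega

variable {u : ι → Fin n → K[X]}

theorem exists_coeff_sum_smul_apply_ne_zero (hLV : LinearIndependent K fun k => LV (u k))
    {p : ι → K[X]} {k₀ : ι} (hk₀ : p k₀ ≠ 0)
    (hmax : ∀ k, p k ≠ 0 → (p k).natDegree + vdeg (u k) ≤ (p k₀).natDegree + vdeg (u k₀)) :
    ∃ idx, ((∑ k, p k • u k) idx).coeff ((p k₀).natDegree + vdeg (u k₀)) ≠ 0 := by
  set D := (p k₀).natDegree + vdeg (u k₀)
  let c : ι → K := fun k => if (p k).natDegree + vdeg (u k) = D then (p k).leadingCoeff else 0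
  have hcoeff : ∀ idx, ((∑ k, p k • u k) idx).coeff D = (∑ k, c k • LV (u k)) idx := by
    intro idx
    simp only [Finset.sum_apply, Pi.smul_apply, smul_eq_mul, finsetSum_coeff]
    refine Finset.sum_congr rfl fun k _ => ?_
    by_cases hpk : p k = 0
    · simp [c, hpk]
    · rw [coeff_mul_apply_of_natDegree_add_vdeg_le (hmax k hpk)]
      split_ifs <;> simp [c, *]
  have hcomb : ∑ k, c k • LV (u k) ≠ 0 := fun h0 => by
    have hc := Fintype.linearIndependent_iff.mp hLV c h0 k₀
    simp only [c, D, if_true, leadingCoeff_eq_zero] at hc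
    exact hk₀ hc
  obtain ⟨idx, hidx⟩ := Function.ne_iff.mp hcomb
  exact ⟨idx, by rwa [hcoeff]⟩

theorem exists_le_natDegree_sum_smul_apply (hLV : LinearIndependent K fun k => LV (u k))
    {p : ι → K[X]} {k : ι} (hk : p k ≠ 0) :
    ∃ idx, (p k).natDegree + vdeg (u k) ≤ ((∑ j, p j • u j) idx).natDegree ∧
      (∑ j, p j • u j) idx ≠ 0 := by
  obtain ⟨k₀, hk₀, hmax⟩ := Finset.exists_max_image (Finset.univ.filter (p · ≠ 0))
    (fun j => (p j).natDegree + vdeg (u j)) ⟨k, by simpa using hk⟩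
  simp only [Finset.mem_filter, Finset.mem_univ, true_and] at hk₀ hmax
  obtain ⟨idx, hidx⟩ := exists_coeff_sum_smul_apply_ne_zero hLV hk₀ hmax
  refine ⟨idx, (hmax k hk).trans (le_natDegree_of_ne_zero hidx), fun h0 => ?_⟩
  rw [h0, coeff_zero] at hidx
  exact hidx rfl

theorem vdeg_le_vdeg_sum_smul (hLV : LinearIndependent K fun k => LV (u k))
    {p : ι → K[X]} {k : ι} (hk : p k ≠ 0) :
    vdeg (u k) ≤ vdeg (∑ j, p j • u j) := by
  obtain ⟨idx, hle, -⟩ := exists_le_natDegree_sum_smul_apply hLV hk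
  exact (Nat.le_add_left _ _).trans (hle.trans (natDegree_le_vdeg _ idx))

theorem linearIndependent_of_linearIndependent_LV
    (hLV : LinearIndependent K fun k => LV (u k)) : LinearIndependent K[X] u := by
  refine Fintype.linearIndependent_iff.mpr fun p hp k => by_contra fun hk => ?_
  obtain ⟨idx, -, hne⟩ := exists_le_natDegree_sum_smul_apply hLV hk
  rw [hp] at hne
  exact hne rfl

theorem mem_span_image_Iio_of_vdeg_lt [LinearOrder ι]
    (hLV : LinearIndependent K fun k => LV (u k)) (humono : Monotone fun k => vdeg (u k))
    {v : Fin n → K[X]} (hv : v ∈ Submodule.span K[X] (Set.range u)) {i : ι}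
    (hlt : vdeg v < vdeg (u i)) :
    v ∈ Submodule.span K[X] (u '' Set.Iio i) := by
  obtain ⟨p, rfl⟩ := (Submodule.mem_span_range_iff_exists_fun K[X]).mp hv
  refine Submodule.sum_mem _ fun k _ => ?_
  by_cases hk : p k = 0
  · simp [hk]
  · have hki : k < i := lt_of_not_ge fun hik =>
      (hlt.trans_le (humono hik)).not_ge (vdeg_le_vdeg_sum_smul hLV hk)
    exact Submodule.smul_mem _ _ (Submodule.subset_span ⟨k, hki, rfl⟩)

end LeadingVectors

theorem mu_basis_minimal_degrees_general {K : Type*} [Field K] {n : ℕ}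
    (a : Fin n → K[X])
    (u : Fin (n-1) → Fin n → K[X])
    (humem : ∀ i, u i ∈ syz a)
    (humono : Monotone fun i => vdeg (u i))
    (huspan : Submodule.span K[X] (Set.range u) = syz a)
    (hLV : LinearIndependent K fun i => LV (u i))
    (h : Fin (n-1) → Fin n → K[X])
    (hhmem : ∀ i, h i ∈ syz a)
    (hhmono : Monotone fun i => vdeg (h i))
    (hhspan : Submodule.span K[X] (Set.range h) = syz a) :
    ∀ i, vdeg (u i) ≤ vdeg (h i) := by
  intro i
  by_contra! hlt
  let g : {j // j ≠ i} → Fin n → K[X] := fun j => if (j : Fin (n-1)) < i then u j else h j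
  have hh : ∀ j, h j ∈ Submodule.span K[X] (Set.range g) := by
    intro j
    rcases lt_or_ge i j with hij | hji
    · exact Submodule.subset_span ⟨⟨j, hij.ne'⟩, if_neg hij.not_gt⟩
    · refine Submodule.span_mono ?_ (mem_span_image_Iio_of_vdeg_lt hLV humono
        (huspan ▸ hhmem j) ((hhmono hji).trans_lt hlt))
      rintro _ ⟨k, hk, rfl⟩
      exact ⟨⟨k, hk.ne⟩, if_pos hk⟩
  have hu : Set.range u ⊆ Submodule.span K[X] (Set.range g) := by
    rintro _ ⟨k, rfl⟩
    exact Submodule.span_le.mpr (Set.range_subset_iff.mpr hh) (hhspan ▸ humem k)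
  have hcard := card_le_of_linearIndependent_of_range_subset_span
    (linearIndependent_of_linearIndependent_LV hLV) hu
  simp only [Fintype.card_fin, Fintype.card_subtype_compl, Fintype.card_unique] at hcard
  have := i.pos
  omega

/-- minimality of the degrees.  If `u_1, …, u_{n-1}` are nonzero syzygies,
sorted by degree, that generate `syz a` and whose leading vectors are `K`-linearly
independent, then for any sorted nonzero generating family `h_1, …, h_{n-1}` of `syz a`
one has `deg u_i ≤ deg h_i` for each `i`. -/
theorem mu_basis_minimal_degrees {K : Type*} [Field K] {n : ℕ} (hn : 1 < n)
    (a : Fin n → K[X]) (ha : a ≠ 0)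
    (u : Fin (n-1) → Fin n → K[X]) (hu0 : ∀ i, u i ≠ 0)
    (humem : ∀ i, u i ∈ syz a)
    (humono : Monotone fun i => vdeg (u i))
    (huspan : Submodule.span K[X] (Set.range u) = syz a)
    (hLV : LinearIndependent K fun i => LV (u i))
    (h : Fin (n-1) → Fin n → K[X]) (hh0 : ∀ i, h i ≠ 0)
    (hhmem : ∀ i, h i ∈ syz a)
    (hhmono : Monotone fun i => vdeg (h i))
    (hhspan : Submodule.span K[X] (Set.range h) = syz a) :
    ∀ i, vdeg (u i) ≤ vdeg (h i) :=
  mu_basis_minimal_degrees_general a u humem humono huspan hLV h hhmem hhmono hhspan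
end
end

section
/- Let K be a field, n > 1, and a ∈ K[s]^n a nonzero row vector. Suppose u_1,...,u_{n-1} are nonzero elements of syz(a) that generate syz(a) as a K[s]-module and whose leading vectors LV(u_1),...,LV(u_{n-1}) are linearly independent over K. Then there exists a nonzero constant α ∈ K such that the outer product of u_1,...,u_{n-1} equals α · (a/gcd(a))^T. -/
open Polynomial
open scoped Classical

noncomputable section

/-! Write `b = a / g` and choose `h` with `∑ hᵢ aᵢ = g` (Bézout in `K[s]`). Every `eⱼ - bⱼ h` is a
syzygy, hence a combination of the `uₖ`, so the square matrix `M = [h | u₁ ⋯ u_{n-1}]` has a right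
inverse `P` whose first row is `b`. The outer product is, up to sign, the first row of
`adjugate M = det M • P`, that is `det M • b`, and `det M` is a unit of `K[s]`: a nonzero constant. -/

namespace Matrix

variable {R : Type*} [CommRing R]

theorem adjugate_eq_det_smul_of_mul_eq_one {ι : Type*} [Fintype ι] [DecidableEq ι]
    {M P : Matrix ι ι R} (h : M * P = 1) : adjugate M = M.det • P := by
  rw [← Matrix.mul_one (adjugate M), ← h, ← Matrix.mul_assoc, adjugate_mul, smul_mul,
    Matrix.one_mul]

theorem adjugate_of_cons_zero_apply {m : ℕ} (w : Fin (m + 1) → R)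
    (u : Fin m → Fin (m + 1) → R) (i : Fin (m + 1)) :
    adjugate (of fun r => Fin.cons (w r) fun k => u k r) 0 i
      = (-1) ^ (i : ℕ) * (of fun r c => u c (i.succAbove r)).det := by
  rw [adjugate_fin_succ_eq_det_submatrix]
  rfl

theorem exists_isUnit_signed_minor_eq_mul {m : ℕ} (h b : Fin (m + 1) → R)
    (u : Fin m → Fin (m + 1) → R)
    (hmem : ∀ j, Pi.single j 1 - b j • h ∈ Submodule.span R (Set.range u)) :
    ∃ t : R, IsUnit t ∧ ∀ i : Fin (m + 1),
      (-1) ^ (i : ℕ) * (of fun r c => u c (i.succAbove r)).det = t * b i := by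
  choose p hp using fun j => (Submodule.mem_span_range_iff_exists_fun R).mp (hmem j)
  set M : Matrix (Fin (m + 1)) (Fin (m + 1)) R := of fun r => Fin.cons (h r) fun k => u k r
  set P : Matrix (Fin (m + 1)) (Fin (m + 1)) R :=
    of fun k j => (Fin.cons (b j) (p j) : Fin (m + 1) → R) k
  have hMP : M * P = 1 := by
    ext i j
    have hj := congrFun (hp j) i
    simp only [Finset.sum_apply, Pi.smul_apply, smul_eq_mul, Pi.sub_apply, Pi.single_apply] at hj
    simp only [mul_apply, Fin.sum_univ_succ, M, P, of_apply, Fin.cons_zero, Fin.cons_succ,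
      one_apply, mul_comm (u _ i)]
    linear_combination hj
  refine ⟨M.det, isUnit_det_of_right_inverse hMP, fun i => ?_⟩
  rw [← adjugate_of_cons_zero_apply h, adjugate_eq_det_smul_of_mul_eq_one hMP]
  rfl

end Matrix

theorem mem_span_range_of_forall_dvd {R ι : Type*} [CommRing R] [IsPrincipalIdealRing R]
    (a : ι → R) {g : R} (hg : ∀ c, (∀ i, c ∣ a i) → c ∣ g) : g ∈ Ideal.span (Set.range a) := by
  obtain ⟨d, hd⟩ := Submodule.IsPrincipal.principal (Ideal.span (Set.range a))
  rw [hd, Ideal.submodule_span_eq, Ideal.mem_span_singleton]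
  refine hg d fun i => Ideal.mem_span_singleton.mp ?_
  rw [← Ideal.submodule_span_eq, ← hd]
  exact Ideal.subset_span ⟨i, rfl⟩

theorem mem_syz {K : Type*} [Field K] {n : ℕ} {a h : Fin n → K[X]} :
    h ∈ syz a ↔ ∑ i, a i * h i = 0 :=
  Iff.rfl

theorem single_sub_smul_mem_syz {K : Type*} [Field K] {n : ℕ} {a b h : Fin n → K[X]} {g : K[X]}
    (hb : ∀ j, g * b j = a j) (hh : ∑ i, h i * a i = g) (j : Fin n) :
    Pi.single j 1 - b j • h ∈ syz a := by
  have hsmul : ∑ i, a i * (b j * h i) = g * b j := by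
    rw [← hh, Finset.sum_mul]
    exact Finset.sum_congr rfl fun i _ => by ring
  rw [mem_syz]
  simp only [Pi.sub_apply, Pi.smul_apply, smul_eq_mul, mul_sub, Finset.sum_sub_distrib, hsmul, hb]
  exact sub_eq_zero.mpr (dotProduct_single_one a j)

/-- outer product.  If `u_1, …, u_{n-1}` are nonzero syzygies that
generate `syz a` and whose leading vectors are `K`-linearly independent, then there is a
nonzero constant `α ∈ K` such that the outer product of `u_1, …, u_{n-1}` — the vector
whose `i`-th entry is `(−1)^i` times the determinant of the `(n−1)×(n−1)` matrix obtained
from the `n×(n−1)` matrix with columns `u_1, …, u_{n-1}` by deleting the `i`-th row —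
equals `α · (a / gcd a)`.  Here `g` is the monic gcd of the entries of `a`. -/
theorem mu_basis_outer_product {K : Type*} [Field K] {n : ℕ} (hn : 1 < n)
    (a : Fin n → K[X])
    (g : K[X]) (hg : g.Monic) (hgdvd : ∀ i, g ∣ a i)
    (hgmax : ∀ c : K[X], (∀ i, c ∣ a i) → c ∣ g)
    (u : Fin (n-1) → Fin n → K[X])
    (hspan : Submodule.span K[X] (Set.range u) = syz a) :
    ∃ α : K, α ≠ 0 ∧ ∀ i : Fin n,
      (-1 : K[X]) ^ ((i:ℕ)+1) *
        (Matrix.of fun r c : Fin (n-1) =>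
          u c (Fin.cast (by omega : n-1+1 = n)
            ((Fin.cast (by omega : n = n-1+1) i).succAbove r))).det
      = C α * (a i / g) := by
  obtain ⟨m, rfl⟩ : ∃ m, n = m + 1 := ⟨n - 1, by omega⟩
  obtain ⟨h, hh⟩ := Ideal.mem_span_range_iff_exists_fun.mp (mem_span_range_of_forall_dvd a hgmax)
  have hb (j : Fin (m + 1)) : g * (a j / g) = a j :=
    EuclideanDomain.mul_div_cancel' hg.ne_zero (hgdvd j)
  obtain ⟨t, ht, hminor⟩ := Matrix.exists_isUnit_signed_minor_eq_mul h (fun j => a j / g) u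
    fun j => hspan ▸ single_sub_smul_mem_syz hb hh j
  obtain ⟨r, hr, rfl⟩ := Polynomial.isUnit_iff.mp ht
  refine ⟨-r, neg_ne_zero.mpr hr.ne_zero, fun i => ?_⟩
  rw [map_neg, pow_succ, mul_comm _ (-1), mul_assoc]
  -- with `n = m + 1` the two `Fin.cast`s are definitionally the identity
  erw [hminor i]
  ring
end
end

section
/- Let K be a field, n > 1, and a ∈ K[s]^n a nonzero row vector with gcd(a) = 1. For 1 ≤ i < j ≤ n, let u_{ij} ∈ K[s]^n be the vector with −a_j in position i, a_i in position j, and 0 in all other positions. Then syz(a) is generated as a K[s]-module by the set {u_{ij} : 1 ≤ i < j ≤ n}. -/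
open Polynomial
open scoped Classical

noncomputable section

/-!
Since `gcd a = 1` in the principal ideal domain `K[s]`, there is a Bézout vector `b` with
`b ⬝ᵥ a = 1`. Put `u i j = a i • e j - a j • e i` for all `i, j`; as `u j i = -u i j` and
`u i i = 0`, these span the same module as the `u i j` with `i < j`. Every `h` satisfies
`∑ i, ∑ j, (b i * h j) • u i j = (b ⬝ᵥ a) • h - (a ⬝ᵥ h) • b`,
which is `h` itself when `h` is a syzygy.
-/

open Matrix

section ObviousSyzygy

variable {R ι : Type*} [CommRing R] [DecidableEq ι]

def obviousSyzygy (a : ι → R) (i j : ι) : ι → R :=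
  Pi.single j (a i) - Pi.single i (a j)

variable (a : ι → R)

@[simp]
theorem obviousSyzygy_self (i : ι) : obviousSyzygy a i i = 0 :=
  sub_self _

theorem obviousSyzygy_swap (i j : ι) : obviousSyzygy a j i = -obviousSyzygy a i j :=
  (neg_sub _ _).symm

theorem obviousSyzygy_eq_ite {i j : ι} (hij : i ≠ j) :
    obviousSyzygy a i j = fun t => if t = i then -a j else if t = j then a i else 0 := by
  ext t
  by_cases hti : t = i
  · subst hti
    simp [obviousSyzygy, hij]
  · by_cases htj : t = j
    · subst htj
      simp [obviousSyzygy, hti]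
    · simp [obviousSyzygy, hti, htj]

theorem span_obviousSyzygy_of_lt [LinearOrder ι] :
    Submodule.span R {v | ∃ i j : ι, i < j ∧
        v = fun t => if t = i then -a j else if t = j then a i else 0} =
      Submodule.span R (Set.range fun p : ι × ι => obviousSyzygy a p.1 p.2) := by
  apply le_antisymm
  · refine Submodule.span_mono ?_
    rintro v ⟨i, j, hij, rfl⟩
    exact ⟨(i, j), obviousSyzygy_eq_ite a hij.ne⟩
  · rw [Submodule.span_le]
    rintro v ⟨⟨i, j⟩, rfl⟩
    rcases lt_trichotomy i j with hij | rfl | hji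
    · exact Submodule.subset_span ⟨i, j, hij, obviousSyzygy_eq_ite a hij.ne⟩
    · simp
    · show obviousSyzygy a i j ∈ Submodule.span R _
      rw [obviousSyzygy_swap a j i]
      exact Submodule.neg_mem _ (Submodule.subset_span ⟨j, i, hji, obviousSyzygy_eq_ite a hji.ne⟩)

variable [Fintype ι]

theorem dotProduct_obviousSyzygy (i j : ι) : a ⬝ᵥ obviousSyzygy a i j = 0 := by
  simp only [obviousSyzygy, dotProduct_sub, dotProduct_single, mul_comm, sub_self]

theorem sum_smul_obviousSyzygy (b h : ι → R) :
    ∑ i, ∑ j, (b i * h j) • obviousSyzygy a i j = (b ⬝ᵥ a) • h - (a ⬝ᵥ h) • b := by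
  have hterm : ∀ i j, (b i * h j) • obviousSyzygy a i j =
      (b i * a i) • Pi.single j (h j) - (a j * h j) • Pi.single i (b i) := by
    intro i j
    simp only [obviousSyzygy, smul_sub, ← Pi.single_smul', smul_eq_mul]
    congr 2 <;> ring
  simp only [hterm, Finset.sum_sub_distrib, ← Finset.smul_sum, Finset.univ_sum_single,
    ← Finset.sum_smul, dotProduct]

theorem mem_span_obviousSyzygy {b h : ι → R} (hb : b ⬝ᵥ a = 1) (hh : a ⬝ᵥ h = 0) :
    h ∈ Submodule.span R (Set.range fun p : ι × ι => obviousSyzygy a p.1 p.2) := by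
  have hsum : ∑ i, ∑ j, (b i * h j) • obviousSyzygy a i j = h := by
    rw [sum_smul_obviousSyzygy, hb, hh, one_smul, zero_smul, sub_zero]
  rw [← hsum]
  exact Submodule.sum_mem _ fun i _ => Submodule.sum_mem _ fun j _ =>
    Submodule.smul_mem _ _ (Submodule.subset_span ⟨(i, j), rfl⟩)

end ObviousSyzygy

theorem exists_dotProduct_eq_one_of_forall_dvd_isUnit {R ι : Type*} [CommRing R]
    [IsPrincipalIdealRing R] [Fintype ι] {a : ι → R}
    (ha : ∀ c : R, (∀ i, c ∣ a i) → IsUnit c) : ∃ b : ι → R, b ⬝ᵥ a = 1 := by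
  set I := Ideal.span (Set.range a)
  have hgen : IsUnit (Submodule.IsPrincipal.generator I) :=
    ha _ fun i => (Submodule.IsPrincipal.mem_iff_generator_dvd I).mp (Ideal.subset_span ⟨i, rfl⟩)
  have hI : I = ⊤ := by
    rwa [← Ideal.span_singleton_generator I, Ideal.span_singleton_eq_top]
  exact Ideal.mem_span_range_iff_exists_fun.mp ((Ideal.eq_top_iff_one I).mp hI)

theorem syz_generated_by_obvious_syzygies_general {K : Type*} [Field K] {n : ℕ}
    (a : Fin n → K[X])
    (hcop : ∀ c : K[X], (∀ i, c ∣ a i) → IsUnit c) :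
    syz a = Submodule.span K[X]
      {v : Fin n → K[X] | ∃ i j : Fin n, i < j ∧
        v = fun t => if t = i then -(a j) else if t = j then a i else 0} := by
  obtain ⟨b, hb⟩ := exists_dotProduct_eq_one_of_forall_dvd_isUnit hcop
  rw [span_obviousSyzygy_of_lt]
  apply le_antisymm
  · exact fun h hh => mem_span_obviousSyzygy a hb hh
  · rw [Submodule.span_le]
    rintro v ⟨⟨i, j⟩, rfl⟩
    exact dotProduct_obviousSyzygy a i j

/-- obvious syzygies generate.  If `gcd a = 1` (i.e. every common
divisor of the entries of `a` is a unit), then `syz a` is generated over `K[s]` by the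
vectors `u_{ij}` (for `i < j`) having `−a_j` in position `i`, `a_i` in position `j` and
`0` elsewhere. -/
theorem syz_generated_by_obvious_syzygies {K : Type*} [Field K] {n : ℕ} (hn : 1 < n)
    (a : Fin n → K[X]) (ha : a ≠ 0)
    (hcop : ∀ c : K[X], (∀ i, c ∣ a i) → IsUnit c) :
    syz a = Submodule.span K[X]
      {v : Fin n → K[X] | ∃ i j : Fin n, i < j ∧
        v = fun t => if t = i then -(a j) else if t = j then a i else 0} :=
  syz_generated_by_obvious_syzygies_general a hcop
end
end

section
/- Let K be a field, n > 1, and a ∈ K[s]^n a nonzero row vector of degree d = deg(a). Let syz_d(a) = {h ∈ K[s]^n : a·h = 0 and every entry of h has degree ≤ d}, a finite-dimensional K-vector space. If h_1,...,h_l is a K-basis of syz_d(a), then syz(a) is generated as a K[s]-module by h_1,...,h_l. -/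
open Polynomial
open scoped Classical

noncomputable section

/-- Orthogonality of the coefficient vectors: if `a·x = 0`, entries of `a` have
degree ≤ d and entries of `x` have degree ≤ e, then the coefficient vectors of
`s^d` in `a` and `s^e` in `x` are orthogonal. -/
lemma coeff_orth {K : Type*} [Field K] {n : ℕ} (a x : Fin n → K[X]) (d e : ℕ)
    (hd : ∀ i, (a i).natDegree ≤ d) (he : ∀ i, (x i).natDegree ≤ e)
    (hs : ∑ i, a i * x i = 0) : ∑ i, (a i).coeff d * (x i).coeff e = 0 := by
  have h0 := congrArg (fun p : K[X] => p.coeff (d + e)) hs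
  simp only [Polynomial.finset_sum_coeff, Polynomial.coeff_zero] at h0
  rw [← h0]
  exact Finset.sum_congr rfl fun i _ =>
    (Polynomial.coeff_mul_add_eq_of_natDegree_le (hd i) (he i)).symm

/-- `syz_d(a)` is the set of syzygies all of whose entries have degree
at most `d = vdeg a`; it is a `K`-vector space.  If `h_1, …, h_l` is a `K`-basis of
`syz_d(a)` (i.e. the `h_j` lie in `syz_d(a)`, are `K`-linearly independent, and `K`-span
it), then `syz a` is generated by `h_1, …, h_l` as a `K[s]`-module. -/
theorem syz_generated_by_K_basis_of_syzd {K : Type*} [Field K] {n : ℕ} (hn : 1 < n)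
    (a : Fin n → K[X]) (ha : a ≠ 0)
    {l : ℕ} (h : Fin l → Fin n → K[X])
    (hmem : ∀ j, h j ∈ syz a ∧ ∀ i, (h j i).degree ≤ (vdeg a : WithBot ℕ))
    (hli : LinearIndependent K h)
    (hspanK : ∀ x : Fin n → K[X], x ∈ syz a → (∀ i, (x i).degree ≤ (vdeg a : WithBot ℕ)) →
        x ∈ Submodule.span K (Set.range h)) :
    syz a = Submodule.span K[X] (Set.range h) := by
  set d := vdeg a with hdd
  have hda : ∀ i, (a i).natDegree ≤ d := fun i =>
    Finset.le_sup (f := fun i => (a i).natDegree) (Finset.mem_univ i)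
  -- the leading vector of `a` is nonzero at some index `i0`
  obtain ⟨i0, hi0⟩ : ∃ i0, (a i0).coeff d ≠ 0 := by
    haveI : Nonempty (Fin n) := ⟨⟨0, by omega⟩⟩
    obtain ⟨i1, -, hi1⟩ := Finset.exists_mem_eq_sup (Finset.univ : Finset (Fin n))
      Finset.univ_nonempty (fun i => (a i).natDegree)
    by_cases h1 : a i1 = 0
    · have hi1' : vdeg a = (a i1).natDegree := hi1
      have hd0 : d = 0 := by
        rw [hdd, hi1', h1, Polynomial.natDegree_zero]
      obtain ⟨i, hi⟩ : ∃ i, a i ≠ 0 := by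
        by_contra hc; push_neg at hc; exact ha (funext hc)
      refine ⟨i, ?_⟩
      have h0 : (a i).natDegree = 0 := le_antisymm (hd0 ▸ hda i) (Nat.zero_le _)
      rw [hd0, ← h0]
      exact Polynomial.leadingCoeff_ne_zero.mpr hi
    · refine ⟨i1, ?_⟩
      have h2 : d = (a i1).natDegree := by rw [hdd]; exact hi1
      rw [h2]
      exact Polynomial.leadingCoeff_ne_zero.mpr h1
  apply le_antisymm
  · -- the main inclusion
    have key : ∀ N : ℕ, ∀ x, x ∈ syz a → (∀ i, (x i).natDegree ≤ N) →
        x ∈ Submodule.span K[X] (Set.range h) := by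
      intro N
      induction N using Nat.strong_induction_on with
      | _ N ih =>
        intro x hx hxd
        by_cases hNd : N ≤ d
        · -- base case : all degrees at most d, use the K-span hypothesis
          have hxK := hspanK x hx (fun i =>
            Polynomial.degree_le_natDegree.trans
              (by exact_mod_cast (hxd i).trans hNd))
          exact Submodule.span_le_restrictScalars K K[X] (Set.range h) hxK
        · push_neg at hNd
          set v : Fin n → K := fun i => (x i).coeff N with hv
          have hxsum : ∑ i, a i * x i = 0 := hx
          have horth : ∑ i, (a i).coeff d * v i = 0 :=
            coeff_orth a x d N hda hxd hxsum
          set c : K := (a i0).coeff d with hc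
          set g : Fin n → K[X] := fun j =>
            Polynomial.C (v j / c) * a i0 -
              if j = i0 then ∑ i, Polynomial.C (v i / c) * a i else 0 with hg
          -- g is a syzygy
          have hgsyz : g ∈ syz a := by
            show ∑ j, a j * g j = 0
            have expand : ∀ j, a j * g j = a j * (Polynomial.C (v j / c) * a i0) -
                (if j = i0 then a i0 * (∑ i, Polynomial.C (v i / c) * a i) else 0) := by
              intro j
              simp only [hg]
              split_ifs with hj
              · subst hj; ring
              · ring
            rw [Finset.sum_congr rfl fun j _ => expand j, Finset.sum_sub_distrib,
              Finset.sum_ite_eq' Finset.univ i0 (fun _ => a i0 * ∑ i, Polynomial.C (v i / c) * a i)]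
            have lhs : ∑ j, a j * (Polynomial.C (v j / c) * a i0) =
                a i0 * ∑ i, Polynomial.C (v i / c) * a i := by
              rw [Finset.mul_sum]
              exact Finset.sum_congr rfl fun j _ => by ring
            rw [lhs]
            simp
          -- degrees of g are at most d
          have hgnd : ∀ j, (g j).natDegree ≤ d := by
            intro j
            rw [Polynomial.natDegree_le_iff_coeff_eq_zero]
            intro m hm
            have hz : ∀ i, (a i).coeff m = 0 := fun i =>
              Polynomial.coeff_eq_zero_of_natDegree_lt (lt_of_le_of_lt (hda i) hm)
            by_cases hj : j = i0 <;>
              simp [hg, hj, Polynomial.coeff_sub, Polynomial.coeff_C_mul,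
                Polynomial.finset_sum_coeff, hz]
          have hgdeg : ∀ j, (g j).degree ≤ (d : WithBot ℕ) := fun j =>
            Polynomial.degree_le_natDegree.trans (by exact_mod_cast hgnd j)
          -- the coefficient of s^d in g is v
          have hgc : ∀ j, (g j).coeff d = v j := by
            have hsum : ∑ i, (Polynomial.C (v i / c) * a i).coeff d = 0 := by
              have heq : ∑ i, (Polynomial.C (v i / c) * a i).coeff d =
                  (1 / c) * ∑ i, (a i).coeff d * v i := by
                rw [Finset.mul_sum]
                exact Finset.sum_congr rfl fun i _ => by
                  rw [Polynomial.coeff_C_mul]; ring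
              rw [heq, horth, mul_zero]
            intro j
            by_cases hj : j = i0
            · have hgj : g j = Polynomial.C (v j / c) * a i0 -
                  ∑ i, Polynomial.C (v i / c) * a i := by
                simp only [hg]; rw [if_pos hj]
              rw [hgj, Polynomial.coeff_sub, Polynomial.finset_sum_coeff, hsum, sub_zero,
                Polynomial.coeff_C_mul, ← hc, div_mul_cancel₀ _ hi0]
            · have hgj : g j = Polynomial.C (v j / c) * a i0 := by
                simp only [hg]; rw [if_neg hj, sub_zero]
              rw [hgj, Polynomial.coeff_C_mul, ← hc, div_mul_cancel₀ _ hi0]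
          -- g is in the K[X]-span of h
          have hgspan : g ∈ Submodule.span K[X] (Set.range h) :=
            Submodule.span_le_restrictScalars K K[X] (Set.range h)
              (hspanK g hgsyz hgdeg)
          -- reduce x
          set x' : Fin n → K[X] := x - (X ^ (N - d) : K[X]) • g with hx'
          have hx'syz : x' ∈ syz a :=
            Submodule.sub_mem _ hx (Submodule.smul_mem _ _ hgsyz)
          have hx'd : ∀ i, (x' i).natDegree ≤ N - 1 := by
            intro i
            rw [Polynomial.natDegree_le_iff_coeff_eq_zero]
            intro m hm
            have hNm : N ≤ m := by omega
            have happ : x' i = x i - X ^ (N - d) * g i := by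
              simp [hx', Pi.sub_apply, Pi.smul_apply, smul_eq_mul]
            rw [happ, Polynomial.coeff_sub]
            rcases eq_or_lt_of_le hNm with hNm' | hNm'
            · have hNsplit : m = d + (N - d) := by omega
              rw [hNsplit, Polynomial.coeff_X_pow_mul, hgc i, ← hNsplit, ← hNm']
              simp [hv]
            · have h1 : (x i).coeff m = 0 :=
                Polynomial.coeff_eq_zero_of_natDegree_lt (lt_of_le_of_lt (hxd i) hNm')
              have h2 : (X ^ (N - d) * g i).coeff m = 0 := by
                apply Polynomial.coeff_eq_zero_of_natDegree_lt
                calc (X ^ (N - d) * g i).natDegree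
                    ≤ (X ^ (N - d) : K[X]).natDegree + (g i).natDegree :=
                      Polynomial.natDegree_mul_le
                  _ ≤ (N - d) + d := by
                      gcongr
                      · exact (Polynomial.natDegree_X_pow_le _)
                      · exact hgnd i
                  _ ≤ N := by omega
                  _ < m := hNm'
              rw [h1, h2, sub_zero]
          have hx'span := ih (N - 1) (by omega) x' hx'syz hx'd
          have hxeq : x = x' + (X ^ (N - d) : K[X]) • g := by
            simp [hx']
          rw [hxeq]
          exact Submodule.add_mem _ hx'span (Submodule.smul_mem _ _ hgspan)
    intro x hx
    exact key (vdeg x) x hx (fun i =>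
      Finset.le_sup (f := fun i => (x i).natDegree) (Finset.mem_univ i))
  · -- reverse inclusion
    rw [Submodule.span_le]
    rintro _ ⟨j, rfl⟩
    exact (hmem j).1
end
end

section
/- Let K be a field, n > 1, and a ∈ K[s]^n a nonzero row vector of degree d, with associated coefficient matrix A ∈ K^{(2d+1) × n(d+1)}. Let q be the set of non-pivotal column indices of A and let q̃ = {min ρ : ρ a residue class of q modulo n} be the set of basic non-pivotal indices. Then |q̃| = n − 1; equivalently, the non-pivotal indices of A occupy exactly n − 1 residue classes modulo n. -/
open Polynomial
open scoped Classical

noncomputable section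

/-- The number of pivotal columns of a matrix is at most the number of rows. -/
lemma pivotal_filter_card_le {K : Type*} [Field K] {m N : ℕ} (A : Matrix (Fin m) (Fin N) K) :
    (Finset.univ.filter fun r : Fin N => Pivotal A r).card ≤ m := by
  have key : ∀ t : ℕ,
      (Finset.univ.filter fun r : Fin N => Pivotal A r ∧ (r : ℕ) < t).card ≤
        Module.finrank K
          (Submodule.span K ((fun r : Fin N => fun k => A k r) '' {r | (r : ℕ) < t})) := by
    intro t
    induction t with
    | zero => simp
    | succ t ih =>
      by_cases ht : ∃ r : Fin N, (r : ℕ) = t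
      · obtain ⟨rt, hrt⟩ := ht
        have hset : {r : Fin N | (r : ℕ) < t + 1} = insert rt {r : Fin N | (r : ℕ) < t} := by
          ext r
          simp only [Set.mem_setOf_eq, Set.mem_insert_iff, Nat.lt_succ_iff_lt_or_eq]
          constructor
          · rintro (h | h)
            · exact Or.inr h
            · exact Or.inl (Fin.val_injective (h.trans hrt.symm))
          · rintro (rfl | h)
            · exact Or.inr hrt
            · exact Or.inl h
        have hpivset : {r : Fin N | r < rt} = {r : Fin N | (r : ℕ) < t} := by
          ext r; simp [Fin.lt_def, hrt]
        by_cases hp : Pivotal A rt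
        · have hfilter :
              (Finset.univ.filter fun r : Fin N => Pivotal A r ∧ (r : ℕ) < t + 1) =
                insert rt (Finset.univ.filter fun r : Fin N => Pivotal A r ∧ (r : ℕ) < t) := by
            ext r
            simp only [Finset.mem_filter, Finset.mem_univ, true_and, Finset.mem_insert,
              Nat.lt_succ_iff_lt_or_eq]
            constructor
            · rintro ⟨hpr, h | h⟩
              · exact Or.inr ⟨hpr, h⟩
              · exact Or.inl (Fin.val_injective (h.trans hrt.symm))
            · rintro (rfl | ⟨hpr, h⟩)
              · exact ⟨hp, Or.inr hrt⟩
              · exact ⟨hpr, Or.inl h⟩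
          have hnotmem :
              rt ∉ (Finset.univ.filter fun r : Fin N => Pivotal A r ∧ (r : ℕ) < t) := by
            simp [hrt]
          have hltspan :
              Submodule.span K ((fun r : Fin N => fun k => A k r) '' {r | (r : ℕ) < t}) <
                Submodule.span K ((fun r : Fin N => fun k => A k r) '' {r | (r : ℕ) < t + 1}) := by
            rw [hset, Set.image_insert_eq]
            refine lt_of_le_of_ne (Submodule.span_mono (Set.subset_insert _ _)) ?_
            intro heq
            apply hp
            have hmem : (fun k => A k rt) ∈
                Submodule.span K (insert (fun k => A k rt)
                  ((fun r : Fin N => fun k => A k r) '' {r | (r : ℕ) < t})) :=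
              Submodule.subset_span (Set.mem_insert _ _)
            rw [← heq] at hmem
            show (fun k => A k rt) ∈
              Submodule.span K ((fun r : Fin N => fun k => A k r) '' {r | r < rt})
            rwa [hpivset]
          have hfr := Submodule.finrank_lt_finrank_of_lt hltspan
          rw [hfilter, Finset.card_insert_of_notMem hnotmem]
          omega
        · have hmem : (fun k => A k rt) ∈
              Submodule.span K ((fun r : Fin N => fun k => A k r) '' {r | (r : ℕ) < t}) := by
            rw [← hpivset]
            exact not_not.mp hp
          have hspan :
              Submodule.span K ((fun r : Fin N => fun k => A k r) '' {r | (r : ℕ) < t + 1}) =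
                Submodule.span K ((fun r : Fin N => fun k => A k r) '' {r | (r : ℕ) < t}) := by
            rw [hset, Set.image_insert_eq, Submodule.span_insert_eq_span hmem]
          have hfilter :
              (Finset.univ.filter fun r : Fin N => Pivotal A r ∧ (r : ℕ) < t + 1) =
                (Finset.univ.filter fun r : Fin N => Pivotal A r ∧ (r : ℕ) < t) := by
            ext r
            simp only [Finset.mem_filter, Finset.mem_univ, true_and,
              Nat.lt_succ_iff_lt_or_eq]
            constructor
            · rintro ⟨hpr, h | h⟩
              · exact ⟨hpr, h⟩
              · exact absurd (Fin.val_injective (h.trans hrt.symm) ▸ hpr) hp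
            · rintro ⟨hpr, h⟩
              exact ⟨hpr, Or.inl h⟩
          rw [hfilter, hspan]
          exact ih
      · have hset : {r : Fin N | (r : ℕ) < t + 1} = {r : Fin N | (r : ℕ) < t} := by
          ext r
          simp only [Set.mem_setOf_eq, Nat.lt_succ_iff_lt_or_eq]
          exact ⟨fun h => h.resolve_right fun h' => ht ⟨r, h'⟩, Or.inl⟩
        have hfilter :
            (Finset.univ.filter fun r : Fin N => Pivotal A r ∧ (r : ℕ) < t + 1) =
              (Finset.univ.filter fun r : Fin N => Pivotal A r ∧ (r : ℕ) < t) := by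
          ext r
          simp only [Finset.mem_filter, Finset.mem_univ, true_and,
            Nat.lt_succ_iff_lt_or_eq]
          exact ⟨fun ⟨h1, h2⟩ => ⟨h1, h2.resolve_right fun h' => ht ⟨r, h'⟩⟩,
            fun ⟨h1, h2⟩ => ⟨h1, Or.inl h2⟩⟩
        rw [hfilter, hset]
        exact ih
  have h1 := key N
  have h2 : (Finset.univ.filter fun r : Fin N => Pivotal A r ∧ (r : ℕ) < N) =
      (Finset.univ.filter fun r : Fin N => Pivotal A r) := by
    ext r
    simp [r.isLt]
  rw [h2] at h1
  refine h1.trans ?_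
  have h3 := Submodule.finrank_le
    (Submodule.span K ((fun r : Fin N => fun k => A k r) '' {r | (r : ℕ) < N}))
  rwa [Module.finrank_fin_fun] at h3

/-- Two distinct residue classes cannot both be entirely pivotal. -/
lemma two_full_classes {K : Type*} [Field K] {n d : ℕ} (hn : 0 < n)
    (A : Matrix (Fin (2 * d + 1)) (Fin (n * (d + 1))) K)
    {i1 i2 : ℕ} (h1 : i1 < n) (h2 : i2 < n) (hne : i1 ≠ i2)
    (hp1 : ∀ ℓ : Fin (n * (d + 1)), (ℓ : ℕ) % n = i1 → Pivotal A ℓ)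
    (hp2 : ∀ ℓ : Fin (n * (d + 1)), (ℓ : ℕ) % n = i2 → Pivotal A ℓ) : False := by
  have hcard := pivotal_filter_card_le A
  have hlt : ∀ i : ℕ, i < n → ∀ j : Fin (d + 1), i + (j : ℕ) * n < n * (d + 1) := by
    intro i hi j
    calc i + (j : ℕ) * n < n + (j : ℕ) * n := by omega
      _ = n * ((j : ℕ) + 1) := by ring
      _ ≤ n * (d + 1) := Nat.mul_le_mul le_rfl (by omega)
  have hmod : ∀ i : ℕ, i < n → ∀ j : Fin (d + 1), (i + (j : ℕ) * n) % n = i := by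
    intro i hi j
    rw [Nat.add_mul_mod_self_right, Nat.mod_eq_of_lt hi]
  set g1 : Fin (d + 1) → Fin (n * (d + 1)) :=
    fun j => ⟨i1 + (j : ℕ) * n, hlt i1 h1 j⟩ with hg1
  set g2 : Fin (d + 1) → Fin (n * (d + 1)) :=
    fun j => ⟨i2 + (j : ℕ) * n, hlt i2 h2 j⟩ with hg2
  have hinj1 : Function.Injective g1 := by
    intro j1 j2 h
    have hv : i1 + (j1 : ℕ) * n = i1 + (j2 : ℕ) * n := congrArg Fin.val h
    have hv2 : (j1 : ℕ) * n = (j2 : ℕ) * n := by omega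
    exact Fin.val_injective (Nat.eq_of_mul_eq_mul_right hn hv2)
  have hinj2 : Function.Injective g2 := by
    intro j1 j2 h
    have hv : i2 + (j1 : ℕ) * n = i2 + (j2 : ℕ) * n := congrArg Fin.val h
    have hv2 : (j1 : ℕ) * n = (j2 : ℕ) * n := by omega
    exact Fin.val_injective (Nat.eq_of_mul_eq_mul_right hn hv2)
  set S1 := Finset.image g1 Finset.univ with hS1
  set S2 := Finset.image g2 Finset.univ with hS2
  have hc1 : S1.card = d + 1 := by
    rw [hS1, Finset.card_image_of_injective _ hinj1, Finset.card_univ, Fintype.card_fin]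
  have hc2 : S2.card = d + 1 := by
    rw [hS2, Finset.card_image_of_injective _ hinj2, Finset.card_univ, Fintype.card_fin]
  have hsub : S1 ∪ S2 ⊆ Finset.univ.filter fun r => Pivotal A r := by
    intro ℓ hℓ
    rw [Finset.mem_union] at hℓ
    rw [Finset.mem_filter]
    refine ⟨Finset.mem_univ _, ?_⟩
    rcases hℓ with hℓ | hℓ
    · obtain ⟨j, -, rfl⟩ := Finset.mem_image.mp hℓ
      exact hp1 _ (hmod i1 h1 j)
    · obtain ⟨j, -, rfl⟩ := Finset.mem_image.mp hℓ
      exact hp2 _ (hmod i2 h2 j)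
  have hdisj : Disjoint S1 S2 := by
    rw [Finset.disjoint_left]
    rintro ℓ hℓ1 hℓ2
    obtain ⟨j1, -, rfl⟩ := Finset.mem_image.mp hℓ1
    obtain ⟨j2, -, h⟩ := Finset.mem_image.mp hℓ2
    apply hne
    have hv : i2 + (j2 : ℕ) * n = i1 + (j1 : ℕ) * n := congrArg Fin.val h
    have := hmod i2 h2 j2
    rw [hv, hmod i1 h1 j1] at this
    exact this
  have hu := Finset.card_union_of_disjoint hdisj
  have hle := Finset.card_le_card hsub
  omega

/-- The non-pivotal column indices of the coefficient matrix `A` occupy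
exactly `n − 1` residue classes modulo `n`; equivalently, the set of basic non-pivotal
indices has cardinality `n − 1`. -/
theorem card_basic_nonpivotal {K : Type*} [Field K] {n : ℕ} (hn : 1 < n)
    (a : Fin n → K[X]) (ha : a ≠ 0) {d : ℕ} (hd : vdeg a = d)
    (A : Matrix (Fin (2*d+1)) (Fin (n*(d+1))) K)
    (hA : A = coefA d (Nat.zero_lt_of_lt hn) a) :
    ((fun j : Fin (n*(d+1)) => (j:ℕ) % n) '' {j | ¬ Pivotal A j}).ncard = n - 1 := by
  
    subst hA
    have hn0 : 0 < n := Nat.zero_lt_of_lt hn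
    set A := coefA d hn0 a with hA
    have hdeg : ∀ i : Fin n, (a i).natDegree ≤ d := by
      intro i
      rw [← hd]
      show (a i).natDegree ≤ Finset.univ.sup fun i => (a i).natDegree
      exact Finset.le_sup (f := fun i => (a i).natDegree) (Finset.mem_univ i)
    -- existence of an index whose coefficient of degree d is nonzero
    have hex : ∃ i : Fin n, (a i).coeff d ≠ 0 := by
      obtain ⟨i0, hi0⟩ : ∃ i, a i ≠ 0 := by
        by_contra h
        push_neg at h
        exact ha (funext h)
      obtain ⟨i1, -, hi1⟩ := Finset.exists_mem_eq_sup (Finset.univ : Finset (Fin n))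
        ⟨i0, Finset.mem_univ i0⟩ (fun i : Fin n => (a i).natDegree)
      by_cases hz : a i1 = 0
      · have hd0 : d = 0 := by
          rw [← hd]
          show (Finset.univ.sup fun i => (a i).natDegree) = 0
          rw [hi1, hz, Polynomial.natDegree_zero]
        have hnd0 : (a i0).natDegree = 0 := le_antisymm (hd0 ▸ hdeg i0) (Nat.zero_le _)
        refine ⟨i0, ?_⟩
        rw [hd0, ← hnd0]
        exact Polynomial.leadingCoeff_ne_zero.mpr hi0
      · refine ⟨i1, ?_⟩
        have : d = (a i1).natDegree := by rw [← hd]; exact hi1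
        rw [this]
        exact Polynomial.leadingCoeff_ne_zero.mpr hz
    set F : Finset (Fin n) := Finset.univ.filter fun i => (a i).coeff d ≠ 0 with hF
    have hFne : F.Nonempty := by
      obtain ⟨i, hi⟩ := hex
      exact ⟨i, by simp [hF, hi]⟩
    set i₀ : Fin n := F.min' hFne with hi₀
    have hi₀mem : (a i₀).coeff d ≠ 0 :=
      (Finset.mem_filter.mp (F.min'_mem hFne)).2
    have hmin : ∀ i : Fin n, i < i₀ → (a i).coeff d = 0 := by
      intro i hi
      by_contra h
      exact absurd (F.min'_le i (by simp [hF, h])) (not_le.mpr hi)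
    -- the class of i₀ is entirely pivotal
    have hclassI0 : ∀ ℓ : Fin (n * (d + 1)), (ℓ : ℕ) % n = (i₀ : ℕ) → Pivotal A ℓ := by
      intro ℓ hℓ
      set j := (ℓ : ℕ) / n with hj
      have hjd : j ≤ d := by
        have h1 := ℓ.isLt
        have h2 : (ℓ : ℕ) / n < d + 1 :=
          (Nat.div_lt_iff_lt_mul hn0).mpr (Nat.lt_of_lt_of_eq ℓ.isLt (Nat.mul_comm n (d + 1)))
        omega
      have hℓval : (ℓ : ℕ) = j * n + (i₀ : ℕ) := by
        rw [hj, ← hℓ]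
        exact (Nat.div_add_mod' (ℓ : ℕ) n).symm
      intro hmem
      obtain ⟨k0, hk0val⟩ : ∃ k0 : Fin (2 * d + 1), (k0 : ℕ) = d + j :=
        ⟨⟨d + j, by omega⟩, rfl⟩
      have hker : Submodule.span K
            ((fun r : Fin (n * (d + 1)) => fun k => A k r) '' {r | r < ℓ}) ≤
          LinearMap.ker (LinearMap.proj k0 :
            (Fin (2 * d + 1) → K) →ₗ[K] K) := by
        rw [Submodule.span_le]
        rintro x ⟨r, hr, rfl⟩
        simp only [SetLike.mem_coe, LinearMap.mem_ker, LinearMap.proj_apply]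
        show A k0 r = 0
        have hrlt : (r : ℕ) < (ℓ : ℕ) := hr
        have hi'n : (r : ℕ) % n < n := Nat.mod_lt _ hn0
        have hrval : (r : ℕ) = ((r : ℕ) / n) * n + (r : ℕ) % n :=
          (Nat.div_add_mod' (r : ℕ) n).symm
        have hj'le : (r : ℕ) / n ≤ j := by
          by_contra hcon
          push_neg at hcon
          have h5 : (j + 1) * n ≤ ((r : ℕ) / n) * n := Nat.mul_le_mul_right n hcon
          have h6 : ((r : ℕ) / n) * n ≤ (r : ℕ) := Nat.div_mul_le_self _ _
          have h7 : (ℓ : ℕ) < (j + 1) * n := by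
            rw [hℓval, Nat.succ_mul]
            exact Nat.add_lt_add_left i₀.isLt _
          have h8 : (ℓ : ℕ) < (r : ℕ) := lt_of_lt_of_le h7 (le_trans h5 h6)
          omega
        rcases lt_or_eq_of_le hj'le with hltj | heqj
        · rw [hA, coefA]
          simp only [Matrix.of_apply]
          rw [if_pos (show (r : ℕ) / n ≤ ((k0 : ℕ)) by omega)]
          apply Polynomial.coeff_eq_zero_of_natDegree_lt
          have hnd := hdeg ⟨(r : ℕ) % n, hi'n⟩
          omega
        · have hrval2 : (r : ℕ) = j * n + (r : ℕ) % n := by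
            rw [← heqj]; exact hrval
          have hii : (r : ℕ) % n < (i₀ : ℕ) := by omega
          rw [hA, coefA]
          simp only [Matrix.of_apply]
          rw [if_pos (show (r : ℕ) / n ≤ ((k0 : ℕ)) by omega)]
          have hidx : ((k0 : ℕ)) - (r : ℕ) / n = d := by omega
          rw [hidx]
          exact hmin ⟨(r : ℕ) % n, hi'n⟩ (by rwa [Fin.lt_def])
      have hzero : A k0 ℓ = 0 := by
        have := hker hmem
        rw [LinearMap.mem_ker] at this
        exact this
      apply hi₀mem
      rw [hA, coefA] at hzero
      simp only [Matrix.of_apply] at hzero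
      rw [if_pos (show (ℓ : ℕ) / n ≤ ((k0 : ℕ)) by omega)] at hzero
      have hidx : ((k0 : ℕ)) - (ℓ : ℕ) / n = d := by omega
      rw [hidx] at hzero
      have hfin : (⟨(ℓ : ℕ) % n, Nat.mod_lt _ hn0⟩ : Fin n) = i₀ := Fin.ext hℓ
      rwa [hfin] at hzero
    -- every other class contains a non-pivotal index
    have hclass : ∀ x : ℕ, x < n → x ≠ (i₀ : ℕ) →
        ∃ ℓ : Fin (n * (d + 1)), ¬ Pivotal A ℓ ∧ (ℓ : ℕ) % n = x := by
      intro x hx hxne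
      by_contra h
      push_neg at h
      refine two_full_classes hn0 A hx i₀.isLt hxne ?_ hclassI0
      intro ℓ hℓ
      by_contra hp
      exact (h ℓ hp) hℓ
    have hset : ((fun j : Fin (n * (d + 1)) => (j : ℕ) % n) '' {j | ¬ Pivotal A j}) =
        ↑((Finset.range n).erase (i₀ : ℕ)) := by
      ext x
      simp only [Set.mem_image, Set.mem_setOf_eq, Finset.coe_erase, Set.mem_diff,
        Finset.coe_range, Set.mem_Iio, Set.mem_singleton_iff]
      constructor
      · rintro ⟨ℓ, hℓ, rfl⟩
        exact ⟨Nat.mod_lt _ hn0, fun hEq => hℓ (hclassI0 ℓ hEq)⟩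
      · rintro ⟨hxlt, hxne⟩
        obtain ⟨ℓ, hp, hm⟩ := hclass x hxlt hxne
        exact ⟨ℓ, hp, hm⟩
    rw [hset, Set.ncard_coe_finset,
      Finset.card_erase_of_mem (Finset.mem_range.mpr i₀.isLt), Finset.card_range]
end
end

section
/- Let K be a field, n > 1, and a ∈ K[s]^n a nonzero row vector of degree d, with associated coefficient matrix A, pivotal index set p, non-pivotal index set q, basic non-pivotal index set q̃, and row-echelon null vectors b_i (i ∈ q). Then for any ι ∈ q̃ and any integer k with 0 ≤ k ≤ ⌊(n(d+1) − ι)/n⌋, one has b_{ι+kn}^♭ = s^k b_ι^♭ + Σ_{j ∈ p, j < ι, j+kn ∈ q} α_j b_{j+kn}^♭, where the α_j ∈ K are the coefficients in the unique expression A_{*ι} = Σ_{j ∈ p, j < ι} α_j A_{*j}. -/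
open Polynomial
open scoped Classical

noncomputable section

namespace RESaux

variable {K : Type*} [Field K]

/-- shift a coefficient vector up by `t` slots (filling with zeros). -/
def Sshift {N : ℕ} (t : ℕ) (v : Fin N → K) : Fin N → K :=
  fun j => if h : t ≤ (j : ℕ) then
    v ⟨(j : ℕ) - t, lt_of_le_of_lt (Nat.sub_le _ _) j.isLt⟩ else 0

lemma coeff_sum_CX {m : ℕ} (w : Fin m → K) (r : ℕ) :
    (∑ j : Fin m, C (w j) * X ^ (j : ℕ)).coeff r =
      if h : r < m then w ⟨r, h⟩ else 0 := by
  rw [Polynomial.finset_sum_coeff]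
  by_cases h : r < m
  · rw [dif_pos h]
    rw [Finset.sum_eq_single (⟨r, h⟩ : Fin m)]
    · simp
    · intro b _ hb
      have hne : r ≠ (b : ℕ) := by
        intro hbr; exact hb (Fin.ext hbr.symm)
      simp [Polynomial.coeff_C_mul, Polynomial.coeff_X_pow, hne]
    · intro hm; exact absurd (Finset.mem_univ _) hm
  · rw [dif_neg h]
    apply Finset.sum_eq_zero
    intro b _
    have hne : r ≠ (b : ℕ) := by
      intro hbr; exact h (hbr ▸ b.isLt)
    simp [Polynomial.coeff_C_mul, Polynomial.coeff_X_pow, hne]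

lemma flatv_coeff {n : ℕ} (d : ℕ) (v : Fin (n*(d+1)) → K) (i : Fin n) (r : ℕ) :
    (flatv d v i).coeff r = if h : r < d+1 then
      v ⟨(i : ℕ) + r*n, by
        calc (i:ℕ) + r*n < n + r*n := Nat.add_lt_add_right i.isLt _
          _ = n * (r+1) := by ring
          _ ≤ n * (d+1) := Nat.mul_le_mul le_rfl h⟩ else 0 := by
  unfold flatv
  rw [coeff_sum_CX]

/-- `flatv` as a linear map. -/
def flatvL {n : ℕ} (d : ℕ) : (Fin (n*(d+1)) → K) →ₗ[K] (Fin n → K[X]) where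
  toFun := flatv d
  map_add' u w := by
    funext i
    simp only [flatv, Pi.add_apply, map_add, add_mul, Finset.sum_add_distrib]
  map_smul' c w := by
    funext i
    simp only [flatv, Pi.smul_apply, smul_eq_mul, RingHom.id_apply,
      Polynomial.smul_eq_C_mul, Finset.mul_sum, map_mul, mul_assoc]

/-- the index `i + j n`. -/
def idx {n d : ℕ} (i : Fin n) (j : Fin (d+1)) : Fin (n*(d+1)) :=
  ⟨(i : ℕ) + (j : ℕ)*n, by
    calc (i:ℕ) + (j:ℕ)*n < n + (j:ℕ)*n := Nat.add_lt_add_right i.isLt _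
      _ = n * ((j:ℕ)+1) := by ring
      _ ≤ n * (d+1) := Nat.mul_le_mul le_rfl j.isLt⟩

/-- index bijection `(i, j) ↦ i + j n`. -/
def idxEquiv (n d : ℕ) (hn : 0 < n) : Fin n × Fin (d+1) ≃ Fin (n*(d+1)) where
  toFun p := idx p.1 p.2
  invFun ℓ := (⟨(ℓ:ℕ) % n, Nat.mod_lt _ hn⟩,
      ⟨(ℓ:ℕ) / n, by
        rw [Nat.div_lt_iff_lt_mul hn]
        calc (ℓ:ℕ) < n*(d+1) := ℓ.isLt
          _ = (d+1)*n := Nat.mul_comm _ _⟩)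
  left_inv p := by
    obtain ⟨i, j⟩ := p
    have h1 : ((i:ℕ) + (j:ℕ)*n) % n = (i:ℕ) := by
      rw [Nat.add_mul_mod_self_right, Nat.mod_eq_of_lt i.isLt]
    have h2 : ((i:ℕ) + (j:ℕ)*n) / n = (j:ℕ) := by
      rw [Nat.add_mul_div_right _ _ hn, Nat.div_eq_of_lt i.isLt, Nat.zero_add]
    simp only [Prod.mk.injEq]
    exact ⟨Fin.ext h1, Fin.ext h2⟩
  right_inv ℓ := Fin.ext (Nat.mod_add_div' _ _)

lemma mulVec_entry {n : ℕ} (d : ℕ) (hn : 0 < n) (a : Fin n → K[X])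
    (v : Fin (n*(d+1)) → K) (r : Fin (2*d+1)) :
    (coefA d hn a).mulVec v r =
      ∑ i : Fin n, ∑ j : Fin (d+1),
        (if (j:ℕ) ≤ (r:ℕ) then (a i).coeff ((r:ℕ) - (j:ℕ)) * v (idx i j)
          else 0) := by
  rw [Matrix.mulVec, dotProduct]
  rw [← Equiv.sum_comp (idxEquiv n d hn) (fun ℓ => coefA d hn a r ℓ * v ℓ)]
  rw [Fintype.sum_prod_type]
  simp only [idxEquiv, Equiv.coe_fn_mk]
  refine Finset.sum_congr rfl fun i _ => Finset.sum_congr rfl fun j _ => ?_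
  have h1 : ((idx i j : ℕ)) % n = (i:ℕ) := by
    show ((i:ℕ) + (j:ℕ)*n) % n = (i:ℕ)
    rw [Nat.add_mul_mod_self_right, Nat.mod_eq_of_lt i.isLt]
  have h2 : ((idx i j : ℕ)) / n = (j:ℕ) := by
    show ((i:ℕ) + (j:ℕ)*n) / n = (j:ℕ)
    rw [Nat.add_mul_div_right _ _ hn, Nat.div_eq_of_lt i.isLt, Nat.zero_add]
  simp only [coefA, Matrix.of_apply, h1, h2, Fin.eta]
  rw [ite_mul, zero_mul]

lemma poly_coeff_eq {n : ℕ} (d : ℕ) (hn : 0 < n) (a : Fin n → K[X])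
    (v : Fin (n*(d+1)) → K) (r : ℕ) :
    (∑ i, a i * flatv d v i).coeff r =
      ∑ i : Fin n, ∑ j : Fin (d+1),
        (if (j:ℕ) ≤ r then (a i).coeff (r - (j:ℕ)) * v (idx i j)
          else 0) := by
  rw [Polynomial.finset_sum_coeff]
  refine Finset.sum_congr rfl fun i _ => ?_
  unfold flatv
  rw [Finset.mul_sum, Polynomial.finset_sum_coeff]
  refine Finset.sum_congr rfl fun j _ => ?_
  rw [← mul_assoc, Polynomial.coeff_mul_X_pow']
  by_cases hjr : (j:ℕ) ≤ r
  · rw [if_pos hjr, if_pos hjr, Polynomial.coeff_mul_C]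
    rfl
  · rw [if_neg hjr, if_neg hjr]

/-- membership in the kernel of `A` is the same as being a syzygy after flattening. -/
lemma mulVec_eq_zero_iff {n : ℕ} (d : ℕ) (hn : 0 < n) (a : Fin n → K[X])
    (hdeg : ∀ i, (a i).natDegree ≤ d) (v : Fin (n*(d+1)) → K) :
    (coefA d hn a).mulVec v = 0 ↔ (∑ i, a i * flatv d v i) = 0 := by
  constructor
  · intro h
    ext r
    rw [Polynomial.coeff_zero, poly_coeff_eq d hn a v r]
    by_cases hr : r < 2*d+1
    · have := congrFun h ⟨r, hr⟩
      rw [mulVec_entry d hn a v ⟨r, hr⟩] at this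
      simpa using this
    · apply Finset.sum_eq_zero; intro i _
      apply Finset.sum_eq_zero; intro j _
      by_cases hjr : (j:ℕ) ≤ r
      · rw [if_pos hjr]
        have hj : (j:ℕ) ≤ d := Nat.lt_succ_iff.mp j.isLt
        have hdi := hdeg i
        have : (a i).natDegree < r - (j:ℕ) := by omega
        rw [Polynomial.coeff_eq_zero_of_natDegree_lt this, zero_mul]
      · rw [if_neg hjr]
  · intro h
    funext r
    rw [mulVec_entry d hn a v r, Pi.zero_apply]
    have := congrArg (fun p => Polynomial.coeff p (r:ℕ)) h
    simp only [Polynomial.coeff_zero] at this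
    rw [poly_coeff_eq d hn a v (r:ℕ)] at this
    exact this

/-- flattening a shifted vector multiplies by `X^k`, provided the top coefficients vanish. -/
lemma flatv_shift {n : ℕ} (d : ℕ) (k : ℕ) (v : Fin (n*(d+1)) → K)
    (hsupp : ∀ j : Fin (n*(d+1)), n*(d+1) ≤ (j:ℕ) + k*n → v j = 0) :
    flatv d (Sshift (k*n) v) = (X : K[X])^k • flatv d v := by
  funext i
  ext r
  rw [flatv_coeff]
  have hR : ((X : K[X])^k • flatv d v) i = flatv d v i * X^k := by
    simp only [Pi.smul_apply, smul_eq_mul, mul_comm]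
  rw [hR, Polynomial.coeff_mul_X_pow', ]
  by_cases hkr : k ≤ r
  · rw [if_pos hkr, flatv_coeff]
    by_cases hr : r < d+1
    · rw [dif_pos hr]
      have hrk : r - k < d+1 := by omega
      rw [dif_pos hrk]
      unfold Sshift
      have hle : k*n ≤ (i:ℕ) + r*n := by
        calc k*n ≤ r*n := Nat.mul_le_mul_right _ hkr
          _ ≤ (i:ℕ) + r*n := Nat.le_add_left _ _
      rw [dif_pos hle]
      congr 1
      apply Fin.ext
      show (i:ℕ) + r*n - k*n = (i:ℕ) + (r-k)*n
      have : r*n = (r-k)*n + k*n := by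
        rw [← Nat.add_mul]; congr 1; omega
      omega
    · rw [dif_neg hr]
      by_cases hrk : r - k < d+1
      · rw [dif_pos hrk]
        symm
        apply hsupp
        show n*(d+1) ≤ (i:ℕ) + (r-k)*n + k*n
        have h1 : (d+1) ≤ (r-k) + k := by omega
        calc n*(d+1) ≤ n*((r-k)+k) := Nat.mul_le_mul le_rfl h1
          _ = (r-k)*n + k*n := by ring
          _ ≤ (i:ℕ) + (r-k)*n + k*n := by omega
      · rw [dif_neg hrk]
  · rw [if_neg hkr]
    by_cases hr : r < d+1
    · rw [dif_pos hr]
      unfold Sshift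
      rw [dif_neg]
      intro hle
      have : k*n ≤ (i:ℕ) + r*n := hle
      have hn' : (i:ℕ) < n := i.isLt
      have : (i:ℕ) + r*n < n + r*n := Nat.add_lt_add_right hn' _
      have hkr' : k*n ≤ n + r*n := by omega
      have : k ≤ r := by
        by_contra hc
        push_neg at hc
        have : r + 1 ≤ k := hc
        have : (r+1)*n ≤ k*n := Nat.mul_le_mul_right _ this
        have : n + r*n ≤ k*n := by
          calc n + r*n = (r+1)*n := by ring
            _ ≤ k*n := this
        omega
      exact hkr this
    · rw [dif_neg hr]

/-- columns of a matrix. -/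
def col {m N : ℕ} (A : Matrix (Fin m) (Fin N) K) (j : Fin N) : Fin m → K :=
  fun k => A k j

lemma mulVec_eq_sum_smul_col {m N : ℕ} (A : Matrix (Fin m) (Fin N) K)
    (v : Fin N → K) : A.mulVec v = ∑ ℓ : Fin N, v ℓ • col A ℓ := by
  funext r
  rw [Matrix.mulVec, dotProduct, Finset.sum_apply]
  refine Finset.sum_congr rfl fun ℓ _ => ?_
  simp [col, mul_comm]

/-- an index at which a kernel vector has its top nonzero entry is non-pivotal. -/
lemma not_pivotal_of_kervec {m N : ℕ} (A : Matrix (Fin m) (Fin N) K)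
    (v : Fin N → K) (hv : A.mulVec v = 0) (i0 : Fin N) (h0 : v i0 ≠ 0)
    (hsupp : ∀ j : Fin N, i0 < j → v j = 0) : ¬ Pivotal A i0 := by
  unfold Pivotal
  rw [not_not]
  have hsum : ∑ ℓ : Fin N, v ℓ • col A ℓ = 0 := by
    rw [← mulVec_eq_sum_smul_col, hv]
  have hsplit : v i0 • col A i0 +
      ∑ ℓ ∈ Finset.univ.erase i0, v ℓ • col A ℓ = 0 := by
    rw [Finset.add_sum_erase Finset.univ (fun ℓ => v ℓ • col A ℓ) (Finset.mem_univ i0)]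
    exact hsum
  have herase : ∑ ℓ ∈ Finset.univ.erase i0, v ℓ • col A ℓ =
      ∑ ℓ ∈ Finset.univ.filter (· < i0), v ℓ • col A ℓ := by
    symm
    apply Finset.sum_subset
    · intro ℓ hℓ
      rw [Finset.mem_filter] at hℓ
      exact Finset.mem_erase.mpr ⟨ne_of_lt hℓ.2, Finset.mem_univ _⟩
    · intro ℓ hℓ hℓ'
      rw [Finset.mem_erase] at hℓ
      rw [Finset.mem_filter] at hℓ'
      push_neg at hℓ'
      have : i0 < ℓ := lt_of_le_of_ne (hℓ' (Finset.mem_univ ℓ)) (Ne.symm hℓ.1)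
      rw [hsupp ℓ this, zero_smul]
  rw [herase] at hsplit
  have hcol : col A i0 = ∑ ℓ ∈ Finset.univ.filter (· < i0),
      (-(v ℓ / v i0)) • col A ℓ := by
    have h1 : v i0 • col A i0 = -∑ ℓ ∈ Finset.univ.filter (· < i0), v ℓ • col A ℓ := by
      rw [eq_neg_iff_add_eq_zero]; exact hsplit
    have h2 : col A i0 = (v i0)⁻¹ • (v i0 • col A i0) := by
      rw [smul_smul, inv_mul_cancel₀ h0, one_smul]
    rw [h2, h1, smul_neg, Finset.smul_sum, ← Finset.sum_neg_distrib]
    refine Finset.sum_congr rfl fun ℓ _ => ?_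
    rw [smul_smul]
    rw [← neg_smul]
    congr 1
    field_simp
  show col A i0 ∈ _
  rw [hcol]
  apply Submodule.sum_mem
  intro ℓ hℓ
  rw [Finset.mem_filter] at hℓ
  apply Submodule.smul_mem
  apply Submodule.subset_span
  exact ⟨ℓ, hℓ.2, rfl⟩

/-- a kernel vector supported on pivotal indices vanishes. -/
lemma kervec_eq_zero {m N : ℕ} (A : Matrix (Fin m) (Fin N) K)
    (v : Fin N → K) (hv : A.mulVec v = 0)
    (hs : ∀ j : Fin N, ¬ Pivotal A j → v j = 0) : v = 0 := by
  by_contra hne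
  have hSne : (Finset.univ.filter (fun j => v j ≠ 0)).Nonempty := by
    rw [Finset.filter_nonempty_iff]
    by_contra hc
    push_neg at hc
    apply hne
    funext j
    exact hc j (Finset.mem_univ j)
  have hj0mem := (Finset.univ.filter (fun j => v j ≠ 0)).max'_mem hSne
  have hj0 : v ((Finset.univ.filter (fun j => v j ≠ 0)).max' hSne) ≠ 0 :=
    (Finset.mem_filter.mp hj0mem).2
  have htop : ∀ j : Fin N, (Finset.univ.filter (fun j => v j ≠ 0)).max' hSne < j → v j = 0 := by
    intro j hj
    by_contra hc
    have hjS : j ∈ Finset.univ.filter (fun j => v j ≠ 0) :=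
      Finset.mem_filter.mpr ⟨Finset.mem_univ _, hc⟩
    have := (Finset.univ.filter (fun j => v j ≠ 0)).le_max' j hjS
    exact absurd (lt_of_lt_of_le hj this) (lt_irrefl _)
  exact hj0 (hs _ (not_pivotal_of_kervec A v hv _ hj0 htop))

end RESaux

/-- recurrence among row-echelon syzygies.  Indices are 0-based, with
`shiftIdx j (k*n)` denoting `j + kn` (the shift is taken mod `n(d+1)`, which is the
identity in the stated range).  For a basic non-pivotal index `ι` and `0 ≤ k` with
`ι + kn < n(d+1)`:
`b_{ι+kn}^♭ = s^k b_ι^♭ + Σ_{j ∈ p, j < ι, j+kn ∈ q} α_j b_{j+kn}^♭`,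
where `α_j = −(B ι) j` are the coefficients in `A_{*ι} = Σ_{j ∈ p, j < ι} α_j A_{*j}`. -/
theorem row_echelon_syzygy_recurrence {K : Type*} [Field K] {n : ℕ} (hn : 1 < n)
    (a : Fin n → K[X]) (ha : a ≠ 0) {d : ℕ} (hd : vdeg a = d)
    (A : Matrix (Fin (2*d+1)) (Fin (n*(d+1))) K)
    (hA : A = coefA d (Nat.zero_lt_of_lt hn) a)
    (B : Fin (n*(d+1)) → Fin (n*(d+1)) → K) (hB : IsEchelonNull A B)
    (ι : Fin (n*(d+1))) (hι : BasicNP n A ι)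
    (k : ℕ) (hk : (ι:ℕ) + k*n < n*(d+1)) :
    flatv d (B (shiftIdx ι (k*n))) =
      (X : K[X])^k • flatv d (B ι) +
      ∑ j ∈ Finset.univ.filter (fun j : Fin (n*(d+1)) =>
          Pivotal A j ∧ j < ι ∧ ¬ Pivotal A (shiftIdx j (k*n))),
        (-(B ι j)) • flatv d (B (shiftIdx j (k*n))) := by
  classical
  subst hA
  have hn0 : 0 < n := Nat.zero_lt_of_lt hn
  set A := coefA d (Nat.zero_lt_of_lt hn) a with hAdef
  have hdeg : ∀ i, (a i).natDegree ≤ d := by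
    intro i
    rw [← hd]
    exact Finset.le_sup (f := fun i => (a i).natDegree) (Finset.mem_univ i)
  set t := k*n with ht
  set F : Finset (Fin (n*(d+1))) := Finset.univ.filter (fun j : Fin (n*(d+1)) =>
      Pivotal A j ∧ j < ι ∧ ¬ Pivotal A (shiftIdx j (k*n))) with hF
  -- basic facts about `B ι`
  have hιnp : ¬ Pivotal A ι := hι.1
  have hBι := hB ι hιnp
  have hsuppι : ∀ j : Fin (n*(d+1)), ι < j → B ι j = 0 := by
    intro j hj
    exact hBι.2.2 j (ne_of_gt hj) (fun hc => absurd hc.2 (not_lt.mpr (le_of_lt hj)))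
  -- shift arithmetic
  have hshift : ∀ j : Fin (n*(d+1)), (j:ℕ) + t < n*(d+1) →
      ((shiftIdx j t : Fin (n*(d+1))) : ℕ) = (j:ℕ) + t := by
    intro j hj
    exact Nat.mod_eq_of_lt hj
  have hshift_le : ∀ j : Fin (n*(d+1)), (j:ℕ) ≤ (ι:ℕ) →
      ((shiftIdx j t : Fin (n*(d+1))) : ℕ) = (j:ℕ) + t := by
    intro j hj
    exact hshift j (by omega)
  -- top-support of `B ι` relative to the shift
  have hsupp' : ∀ j : Fin (n*(d+1)), n*(d+1) ≤ (j:ℕ) + t → B ι j = 0 := by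
    intro j hj
    apply hsuppι
    have : (ι:ℕ) < (j:ℕ) := by omega
    exact this
  -- the shifted vector is again a kernel vector
  have hflatshift : flatv d (RESaux.Sshift t (B ι)) = (X : K[X])^k • flatv d (B ι) :=
    RESaux.flatv_shift d k (B ι) hsupp'
  have hkerι : (∑ i, a i * flatv d (B ι) i) = 0 :=
    (RESaux.mulVec_eq_zero_iff d (Nat.zero_lt_of_lt hn) a hdeg (B ι)).mp hBι.1
  have hkernS : A.mulVec (RESaux.Sshift t (B ι)) = 0 := by
    rw [hAdef]
    rw [RESaux.mulVec_eq_zero_iff d (Nat.zero_lt_of_lt hn) a hdeg]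
    rw [hflatshift]
    have : ∑ i, a i * ((X : K[X])^k • flatv d (B ι)) i
        = (X : K[X])^k * ∑ i, a i * flatv d (B ι) i := by
      rw [Finset.mul_sum]
      refine Finset.sum_congr rfl fun i _ => ?_
      simp only [Pi.smul_apply, smul_eq_mul]
      ring
    rw [this, hkerι, mul_zero]
  -- value of the shifted vector at shifted indices
  have hSval : ∀ j : Fin (n*(d+1)), (j:ℕ) ≤ (ι:ℕ) →
      RESaux.Sshift t (B ι) (shiftIdx j t) = B ι j := by
    intro j hj
    have h1 : ((shiftIdx j t : Fin (n*(d+1))) : ℕ) = (j:ℕ) + t := hshift_le j hj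
    unfold RESaux.Sshift
    rw [dif_pos (by omega)]
    refine congrArg (B ι) (Fin.ext ?_)
    show ((shiftIdx j t : Fin (n*(d+1))) : ℕ) - t = (j:ℕ)
    omega
  -- the shifted basic index is non-pivotal
  have hιt : ((shiftIdx ι t : Fin (n*(d+1))) : ℕ) = (ι:ℕ) + t := hshift_le ι le_rfl
  have hι2 : ¬ Pivotal A (shiftIdx ι t) := by
    apply RESaux.not_pivotal_of_kervec A (RESaux.Sshift t (B ι)) hkernS
    · rw [hSval ι le_rfl, hBι.2.1]
      exact one_ne_zero
    · intro j hj
      have hlt : ((shiftIdx ι t : Fin (n*(d+1))) : ℕ) < (j:ℕ) := hj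
      rw [hιt] at hlt
      unfold RESaux.Sshift
      by_cases hjt : t ≤ (j:ℕ)
      · rw [dif_pos hjt]
        apply hsuppι
        exact Fin.lt_def.mpr (by show (ι:ℕ) < (j:ℕ) - t; omega)
      · rw [dif_neg hjt]
  have hBιt := hB (shiftIdx ι t) hι2
  -- injectivity of shifting on indices `≤ ι`
  have hinj : ∀ j b : Fin (n*(d+1)), (j:ℕ) ≤ (ι:ℕ) → (b:ℕ) ≤ (ι:ℕ) →
      shiftIdx j t = shiftIdx b t → j = b := by
    intro j b hjι hbι hjb
    have h1 := hshift_le j hjι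
    have h2 := hshift_le b hbι
    have := congrArg (fun x : Fin (n*(d+1)) => (x:ℕ)) hjb
    simp only [h1, h2] at this
    exact Fin.ext (by omega)
  -- the candidate vector
  set w : Fin (n*(d+1)) → K := RESaux.Sshift t (B ι) +
      ∑ j ∈ F, (-(B ι j)) • B (shiftIdx j t) with hw
  have hFmem : ∀ j ∈ F, Pivotal A j ∧ j < ι ∧ ¬ Pivotal A (shiftIdx j t) := by
    intro j hj
    exact (Finset.mem_filter.mp hj).2
  -- `w` is a kernel vector
  have hmulw : A.mulVec w = 0 := by
    have hsum : A.mulVec (∑ j ∈ F, (-(B ι j)) • B (shiftIdx j t))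
        = ∑ j ∈ F, (-(B ι j)) • A.mulVec (B (shiftIdx j t)) := by
      rw [← Matrix.mulVecLin_apply, map_sum]
      refine Finset.sum_congr rfl fun j _ => ?_
      rw [map_smul, Matrix.mulVecLin_apply]
    rw [hw, Matrix.mulVec_add, hkernS, zero_add, hsum]
    apply Finset.sum_eq_zero
    intro j hj
    rw [(hB _ (hFmem j hj).2.2).1, smul_zero]
  -- the difference vanishes at all non-pivotal indices
  have hdiff : B (shiftIdx ι t) - w = 0 := by
    have hker : A.mulVec (B (shiftIdx ι t) - w) = 0 := by
      rw [Matrix.mulVec_sub, hBιt.1, hmulw, sub_zero]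
    apply RESaux.kervec_eq_zero A _ hker
    intro j0 hj0
    rw [Pi.sub_apply, sub_eq_zero]
    have hwval : w j0 = RESaux.Sshift t (B ι) j0 +
        ∑ j ∈ F, (-(B ι j)) * B (shiftIdx j t) j0 := by
      simp only [hw, Pi.add_apply, Finset.sum_apply, Pi.smul_apply, smul_eq_mul]
    by_cases hcase : j0 = shiftIdx ι t
    · rw [hcase] at hwval ⊢
      rw [hBιt.2.1, hwval, hSval ι le_rfl, hBι.2.1]
      have hzero : ∑ j ∈ F, (-(B ι j)) * B (shiftIdx j t) (shiftIdx ι t) = 0 := by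
        apply Finset.sum_eq_zero
        intro j hj
        have hmem := hFmem j hj
        have hne : shiftIdx ι t ≠ shiftIdx j t := by
          intro hc
          have := hinj ι j le_rfl (le_of_lt hmem.2.1) hc
          exact absurd (this ▸ hmem.2.1) (lt_irrefl _)
        rw [(hB _ hmem.2.2).2.2 (shiftIdx ι t) hne (fun hc => absurd hc.1 hι2), mul_zero]
      rw [hzero, add_zero]
    · rw [hBιt.2.2 j0 hcase (fun hc => absurd hc.1 hj0), hwval]
      by_cases hex : ∃ j ∈ F, shiftIdx j t = j0
      · obtain ⟨j, hjF, hjeq⟩ := hex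
        have hmem := hFmem j hjF
        have hsum1 : ∑ b ∈ F, (-(B ι b)) * B (shiftIdx b t) j0 = -(B ι j) := by
          rw [Finset.sum_eq_single j]
          · rw [← hjeq, (hB _ hmem.2.2).2.1, mul_one]
          · intro b hbF hbj
            have hmemb := hFmem b hbF
            have hne : j0 ≠ shiftIdx b t := by
              intro hc
              exact hbj (hinj b j (le_of_lt hmemb.2.1) (le_of_lt hmem.2.1)
                (by rw [← hc, hjeq]))
            rw [(hB _ hmemb.2.2).2.2 j0 hne (fun hc => absurd hc.1 hj0), mul_zero]
          · intro hc
            exact absurd hjF hc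
        rw [hsum1, ← hjeq, hSval j (le_of_lt hmem.2.1)]
        ring
      · push_neg at hex
        have hsum0 : ∑ b ∈ F, (-(B ι b)) * B (shiftIdx b t) j0 = 0 := by
          apply Finset.sum_eq_zero
          intro b hbF
          have hmemb := hFmem b hbF
          rw [(hB _ hmemb.2.2).2.2 j0 (fun hc => hex b hbF hc.symm)
            (fun hc => absurd hc.1 hj0), mul_zero]
        rw [hsum0, add_zero]
        unfold RESaux.Sshift
        by_cases hjt : t ≤ (j0:ℕ)
        · rw [dif_pos hjt]
          set j' : Fin (n*(d+1)) := ⟨(j0:ℕ) - t, lt_of_le_of_lt (Nat.sub_le _ _) j0.isLt⟩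
            with hj'
          by_cases hj'ι : j' = ι
          · exfalso
            apply hcase
            apply Fin.ext
            rw [hιt]
            have : (j':ℕ) = (ι:ℕ) := congrArg _ hj'ι
            simp only [hj'] at this
            omega
          · by_cases hpiv : Pivotal A j' ∧ j' < ι
            · exfalso
              have hj'shift : shiftIdx j' t = j0 := by
                apply Fin.ext
                rw [hshift_le j' (le_of_lt hpiv.2)]
                show (j0:ℕ) - t + t = (j0:ℕ)
                omega
              apply hex j' _ hj'shift
              rw [hF, Finset.mem_filter]
              exact ⟨Finset.mem_univ _, hpiv.1, hpiv.2, hj'shift ▸ hj0⟩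
            · symm
              exact hBι.2.2 j' hj'ι hpiv
        · rw [dif_neg hjt]
  have hBeq : B (shiftIdx ι t) = w := by
    have := sub_eq_zero.mp hdiff
    exact this
  -- flatten and conclude
  rw [hBeq, hw]
  have hlin : flatv d (RESaux.Sshift t (B ι) + ∑ j ∈ F, (-(B ι j)) • B (shiftIdx j t))
      = flatv d (RESaux.Sshift t (B ι)) +
        ∑ j ∈ F, (-(B ι j)) • flatv d (B (shiftIdx j t)) := by
    have h1 : flatv d (RESaux.Sshift t (B ι) + ∑ j ∈ F, (-(B ι j)) • B (shiftIdx j t))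
        = RESaux.flatvL d (RESaux.Sshift t (B ι) +
            ∑ j ∈ F, (-(B ι j)) • B (shiftIdx j t)) := rfl
    rw [h1, map_add, map_sum]
    congr 1
    refine Finset.sum_congr rfl fun j _ => ?_
    rw [map_smul]
    rfl
  rw [hlin, hflatshift]
end
end

section
/- Let K be a field, n > 1, and a ∈ K[s]^n a nonzero row vector of degree d, with associated coefficient matrix A, basic non-pivotal index set q̃, and row-echelon null vectors b_i (i non-pivotal). Then syz(a) is generated as a K[s]-module by the n − 1 polynomial vectors {b_r^♭ : r ∈ q̃}. -/
open Polynomial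
open scoped Classical

noncomputable section

/-! ### Auxiliary machinery for the proof -/

section Aux

variable {K : Type*} [Field K]

/-- Out-of-range-safe access to a finite vector. -/
def vAt {N : ℕ} (v : Fin N → K) (m : ℕ) : K :=
  if h : m < N then v ⟨m, h⟩ else 0

theorem flatv_eq {n : ℕ} (d : ℕ) (v : Fin (n*(d+1)) → K) (i : Fin n) :
    flatv d v i = ∑ t ∈ Finset.range (d+1), C (vAt v ((i:ℕ) + t*n)) * X ^ t := by
  rw [flatv, ← Fin.sum_univ_eq_sum_range (fun t => C (vAt v ((i:ℕ) + t*n)) * X ^ t)]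
  refine Finset.sum_congr rfl fun j _ => ?_
  congr 2
  rw [vAt, dif_pos]

theorem mem_syz_iff {n : ℕ} (a h : Fin n → K[X]) : h ∈ syz a ↔ ∑ i, a i * h i = 0 :=
  Iff.rfl

/-- Index equivalence `Fin n × Fin (d+1) ≃ Fin (n*(d+1))`, `(i,j) ↦ i + j*n`. -/
def idxE {n : ℕ} (d : ℕ) (hn : 0 < n) : Fin n × Fin (d+1) ≃ Fin (n*(d+1)) where
  toFun p := ⟨(p.1:ℕ) + (p.2:ℕ)*n, by
    calc (p.1:ℕ) + (p.2:ℕ)*n < n + (p.2:ℕ)*n := Nat.add_lt_add_right p.1.isLt _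
      _ = n * ((p.2:ℕ)+1) := by ring
      _ ≤ n * (d+1) := Nat.mul_le_mul le_rfl p.2.isLt⟩
  invFun ℓ := (⟨(ℓ:ℕ) % n, Nat.mod_lt _ hn⟩, ⟨(ℓ:ℕ) / n, by
    rw [Nat.div_lt_iff_lt_mul hn]
    exact Nat.lt_of_lt_of_eq ℓ.isLt (Nat.mul_comm n (d+1))⟩)
  left_inv := by
    rintro ⟨i, j⟩
    ext
    · simp [Nat.add_mul_mod_self_right, Nat.mod_eq_of_lt i.isLt]
    · simp [Nat.add_mul_div_right _ _ hn, Nat.div_eq_of_lt i.isLt]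
  right_inv := by
    intro ℓ
    ext
    simp [Nat.mod_add_div']

theorem coeff_syz_sum {n : ℕ} (d : ℕ) (a : Fin n → K[X]) (v : Fin (n*(d+1)) → K) (k : ℕ) :
    (∑ i, a i * flatv d v i).coeff k
      = ∑ i : Fin n, ∑ t ∈ Finset.range (d+1),
          if t ≤ k then vAt v ((i:ℕ) + t*n) * (a i).coeff (k - t) else 0 := by
  rw [Polynomial.finset_sum_coeff]
  refine Finset.sum_congr rfl fun i _ => ?_
  rw [flatv_eq, Finset.mul_sum, Polynomial.finset_sum_coeff]
  refine Finset.sum_congr rfl fun t _ => ?_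
  have h1 : a i * (C (vAt v ((i:ℕ) + t*n)) * X ^ t)
      = (C (vAt v ((i:ℕ)+t*n)) * a i) * X ^ t := by ring
  rw [h1, Polynomial.coeff_mul_X_pow']
  split_ifs with h
  · rw [Polynomial.coeff_C_mul]
  · rfl

theorem mulVec_coefA {n : ℕ} (d : ℕ) (hn : 0 < n) (a : Fin n → K[X])
    (v : Fin (n*(d+1)) → K) (k : Fin (2*d+1)) :
    (coefA d hn a).mulVec v k
      = ∑ i : Fin n, ∑ t ∈ Finset.range (d+1),
          if t ≤ (k:ℕ) then vAt v ((i:ℕ) + t*n) * (a i).coeff ((k:ℕ) - t) else 0 := by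
  rw [Matrix.mulVec, dotProduct,
    ← Equiv.sum_comp (idxE d hn) (fun ℓ => coefA d hn a k ℓ * v ℓ), Fintype.sum_prod_type]
  refine Finset.sum_congr rfl fun i _ => ?_
  rw [← Fin.sum_univ_eq_sum_range]
  refine Finset.sum_congr rfl fun j _ => ?_
  have hmod : ((i:ℕ) + (j:ℕ)*n) % n = (i:ℕ) := by
    rw [Nat.add_mul_mod_self_right, Nat.mod_eq_of_lt i.isLt]
  have hdiv : ((i:ℕ) + (j:ℕ)*n) / n = (j:ℕ) := by
    rw [Nat.add_mul_div_right _ _ hn, Nat.div_eq_of_lt i.isLt, Nat.zero_add]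
  have hb : (i:ℕ) + (j:ℕ)*n < n*(d+1) := (idxE d hn (i, j)).isLt
  have hv : v (idxE d hn (i, j)) = vAt v ((i:ℕ) + (j:ℕ)*n) := by
    unfold vAt; rw [dif_pos hb]; exact congrArg v (Fin.ext rfl)
  show coefA d hn a k (idxE d hn (i, j)) * v (idxE d hn (i, j)) = _
  rw [hv, coefA, Matrix.of_apply]
  have hval : ((idxE d hn (i, j) : Fin (n*(d+1))) : ℕ) = (i:ℕ) + (j:ℕ)*n := rfl
  simp only [hval, hmod, hdiv, Fin.eta]
  split_ifs with h
  · ring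
  · rw [zero_mul]

theorem natDegree_le_of_vdeg {n : ℕ} (a : Fin n → K[X]) (i : Fin n) :
    (a i).natDegree ≤ vdeg a := by
  exact Finset.le_sup (f := fun j => (a j).natDegree) (Finset.mem_univ i)

theorem mulVec_eq_zero_iff {n d : ℕ} (hn : 0 < n) (a : Fin n → K[X]) (hd : vdeg a = d)
    (v : Fin (n*(d+1)) → K) :
    (coefA d hn a).mulVec v = 0 ↔ flatv d v ∈ syz a := by
  have hdegs : ∀ i, (a i).natDegree ≤ d := fun i => hd ▸ natDegree_le_of_vdeg a i
  rw [mem_syz_iff]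
  constructor
  · intro h
    rw [Polynomial.ext_iff]
    intro k
    rw [Polynomial.coeff_zero, coeff_syz_sum]
    by_cases hk : k < 2*d+1
    · have h2 := mulVec_coefA d hn a v ⟨k, hk⟩
      have h3 := congrFun h ⟨k, hk⟩
      rw [Pi.zero_apply] at h3
      rw [h2] at h3
      exact h3
    · refine Finset.sum_eq_zero fun i _ => Finset.sum_eq_zero fun t ht => ?_
      rw [Finset.mem_range] at ht
      rw [if_pos (by omega),
        Polynomial.coeff_eq_zero_of_natDegree_lt (by have := hdegs i; omega), mul_zero]
  · intro h
    funext k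
    rw [Pi.zero_apply, mulVec_coefA, ← coeff_syz_sum d a v, h, Polynomial.coeff_zero]

/-- `flatv` as a `K`-linear map. -/
def flatL {n : ℕ} (d : ℕ) : (Fin (n*(d+1)) → K) →ₗ[K] (Fin n → K[X]) where
  toFun v := flatv d v
  map_add' v w := by
    funext i
    show flatv d (v + w) i = flatv d v i + flatv d w i
    rw [flatv_eq, flatv_eq, flatv_eq, ← Finset.sum_add_distrib]
    refine Finset.sum_congr rfl fun t _ => ?_
    have : vAt (v + w) ((i:ℕ) + t*n) = vAt v ((i:ℕ) + t*n) + vAt w ((i:ℕ) + t*n) := by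
      unfold vAt; split_ifs with hh
    -- in-range: Pi.add_apply; else 0+0
      · rfl
      · rw [add_zero]
    rw [this, C_add]; ring
  map_smul' c v := by
    funext i
    show flatv d (c • v) i = (c • flatv d v) i
    rw [Pi.smul_apply, Polynomial.smul_eq_C_mul, flatv_eq, flatv_eq,
      Finset.mul_sum]
    refine Finset.sum_congr rfl fun t _ => ?_
    have : vAt (c • v) ((i:ℕ) + t*n) = c * vAt v ((i:ℕ) + t*n) := by
      unfold vAt; split_ifs with hh
      · rfl
      · rw [mul_zero]
    rw [this, C_mul]; ring

theorem flatv_sum {n d : ℕ} {ι : Type*} (s : Finset ι) (f : ι → (Fin (n*(d+1)) → K)) :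
    flatv d (∑ i ∈ s, f i) = ∑ i ∈ s, flatv d (f i) :=
  map_sum (flatL d) f s

theorem flatv_smul {n d : ℕ} (c : K) (v : Fin (n*(d+1)) → K) :
    flatv d (c • v) = C c • flatv d v := by
  have h := (flatL (K := K) (n := n) d).map_smul c v
  funext i
  have h2 := congrFun h i
  simp only [flatL, LinearMap.coe_mk, AddHom.coe_mk, RingHom.id_apply] at h2
  rw [h2, Pi.smul_apply, Pi.smul_apply, Polynomial.smul_eq_C_mul, smul_eq_mul]

theorem ker_echelon_zero {m N : ℕ} (A : Matrix (Fin m) (Fin N) K) (u : Fin N → K)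
    (h0 : A.mulVec u = 0) (hnp : ∀ i, ¬ Pivotal A i → u i = 0) : u = 0 := by
  by_contra hu
  have hS : (Finset.univ.filter fun i : Fin N => u i ≠ 0).Nonempty := by
    rw [Finset.filter_nonempty_iff]
    obtain ⟨i, hi⟩ := Function.ne_iff.mp hu
    exact ⟨i, Finset.mem_univ i, hi⟩
  set S := Finset.univ.filter fun i : Fin N => u i ≠ 0 with hSdef
  set i := S.max' hS with hidef
  have hui : u i ≠ 0 := (Finset.mem_filter.mp (S.max'_mem hS)).2
  have hgt : ∀ ℓ : Fin N, i < ℓ → u ℓ = 0 := by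
    intro ℓ hℓ
    by_contra h
    exact absurd (S.le_max' ℓ (Finset.mem_filter.mpr ⟨Finset.mem_univ _, h⟩)) (not_le.mpr hℓ)
  have hpiv : Pivotal A i := by
    by_contra h
    exact hui (hnp i h)
  refine hpiv ?_
  have hcol : (fun k => A k i) = ∑ ℓ ∈ Finset.univ.filter (fun ℓ : Fin N => ℓ < i),
      (-(u ℓ / u i)) • (fun k => A k ℓ) := by
    funext k
    have h1 : ∑ ℓ, A k ℓ * u ℓ = 0 := congrFun h0 k
    have hsplit : ∑ ℓ, A k ℓ * u ℓ
        = (∑ ℓ ∈ Finset.univ.filter (fun ℓ : Fin N => ℓ < i), A k ℓ * u ℓ)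
          + ∑ ℓ ∈ Finset.univ.filter (fun ℓ : Fin N => ¬ ℓ < i), A k ℓ * u ℓ :=
      (Finset.sum_filter_add_sum_filter_not Finset.univ _ _).symm
    have h3 : ∑ ℓ ∈ Finset.univ.filter (fun ℓ : Fin N => ¬ ℓ < i), A k ℓ * u ℓ
        = A k i * u i := by
      refine Finset.sum_eq_single_of_mem i (by simp) fun ℓ hℓ hne => ?_
      rw [Finset.mem_filter] at hℓ
      rw [hgt ℓ (lt_of_le_of_ne (not_lt.mp hℓ.2) (Ne.symm hne)), mul_zero]
    have h4 : A k i * u i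
        + ∑ ℓ ∈ Finset.univ.filter (fun ℓ : Fin N => ℓ < i), A k ℓ * u ℓ = 0 := by
      rw [← h1, hsplit, h3]; ring
    have h5 : A k i * u i
        = - ∑ ℓ ∈ Finset.univ.filter (fun ℓ : Fin N => ℓ < i), A k ℓ * u ℓ :=
      eq_neg_of_add_eq_zero_left h4
    have happ : (∑ ℓ ∈ Finset.univ.filter (fun ℓ : Fin N => ℓ < i),
        (-(u ℓ / u i)) • (fun k => A k ℓ)) k
        = ∑ ℓ ∈ Finset.univ.filter (fun ℓ : Fin N => ℓ < i), (-(u ℓ / u i)) * A k ℓ := by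
      rw [Finset.sum_apply]
      refine Finset.sum_congr rfl fun ℓ _ => rfl
    rw [happ]
    calc A k i = (u i)⁻¹ * (A k i * u i) := by field_simp
    _ = (u i)⁻¹ * (- ∑ ℓ ∈ Finset.univ.filter (fun ℓ : Fin N => ℓ < i), A k ℓ * u ℓ) := by
        rw [h5]
    _ = ∑ ℓ ∈ Finset.univ.filter (fun ℓ : Fin N => ℓ < i), (-(u ℓ / u i)) * A k ℓ := by
        rw [← Finset.sum_neg_distrib, Finset.mul_sum]
        refine Finset.sum_congr rfl fun ℓ _ => ?_
        rw [div_eq_mul_inv]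
        ring
  rw [hcol]
  refine Submodule.sum_mem _ fun ℓ hℓ => Submodule.smul_mem _ _ (Submodule.subset_span ?_)
  exact ⟨ℓ, (Finset.mem_filter.mp hℓ).2, rfl⟩

theorem ker_decomp {m N : ℕ} (A : Matrix (Fin m) (Fin N) K) (B : Fin N → Fin N → K)
    (hB : IsEchelonNull A B) (v : Fin N → K) (hv : A.mulVec v = 0) :
    v = ∑ i ∈ Finset.univ.filter (fun i : Fin N => ¬ Pivotal A i), v i • B i := by
  have key : v - ∑ i ∈ Finset.univ.filter (fun i : Fin N => ¬ Pivotal A i), v i • B i = 0 := by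
    refine ker_echelon_zero A _ ?_ ?_
    · rw [← Matrix.mulVecLin_apply, map_sub, map_sum, Matrix.mulVecLin_apply, hv]
      rw [Finset.sum_eq_zero, sub_zero]
      intro i hi
      rw [map_smul, Matrix.mulVecLin_apply, (hB i (Finset.mem_filter.mp hi).2).1, smul_zero]
    · intro i0 hnp0
      simp only [Pi.sub_apply, Finset.sum_apply, Pi.smul_apply, smul_eq_mul]
      rw [Finset.sum_eq_single_of_mem i0 (by simp [hnp0])]
      · rw [(hB i0 hnp0).2.1, mul_one, sub_self]
      · intro ℓ hℓ hne
        rw [(hB ℓ (Finset.mem_filter.mp hℓ).2).2.2 i0 (Ne.symm hne)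
          (fun hc => hnp0 hc.1), mul_zero]
  have := sub_eq_zero.mp key
  exact this

/-- The one-step shift operator on `K^m` (shift entries up by one, put `0` in front). -/
def shiftMap (m : ℕ) : (Fin m → K) →ₗ[K] (Fin m → K) where
  toFun f := fun k => if h : (k:ℕ) = 0 then 0 else f ⟨(k:ℕ)-1, by omega⟩
  map_add' f g := by
    funext k
    by_cases h : (k:ℕ) = 0 <;> simp [h]
  map_smul' c f := by
    funext k
    by_cases h : (k:ℕ) = 0 <;> simp [h]

theorem shiftMap_col {n : ℕ} (d : ℕ) (hn : 0 < n) (a : Fin n → K[X])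
    (r : Fin (n*(d+1))) (hr : (r:ℕ) + n < n*(d+1)) :
    shiftMap (2*d+1) (fun k => coefA d hn a k r)
      = fun k => coefA d hn a k ⟨(r:ℕ)+n, hr⟩ := by
  funext k
  have hmod : ((r:ℕ)+n) % n = (r:ℕ) % n := Nat.add_mod_right _ _
  have hdiv : ((r:ℕ)+n) / n = (r:ℕ)/n + 1 := Nat.add_div_right _ hn
  show (if h : (k:ℕ) = 0 then 0
      else coefA d hn a ⟨(k:ℕ)-1, by omega⟩ r) = coefA d hn a k ⟨(r:ℕ)+n, hr⟩
  have hval : ((⟨(r:ℕ)+n, hr⟩ : Fin (n*(d+1))) : ℕ) = (r:ℕ)+n := rfl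
  simp only [coefA, Matrix.of_apply, hval, hmod, hdiv]
  by_cases hk : (k:ℕ) = 0
  · rw [dif_pos hk, if_neg (show ¬((r:ℕ)/n + 1 ≤ (k:ℕ)) by rw [hk]; simp)]
  · rw [dif_neg hk]
    show (if ((r:ℕ))/n ≤ (k:ℕ)-1 then (a ⟨(r:ℕ)%n, _⟩).coeff (((k:ℕ)-1) - (r:ℕ)/n) else 0)
      = _
    obtain ⟨q, hq⟩ : ∃ q, (r:ℕ)/n = q := ⟨_, rfl⟩
    rw [hq]
    by_cases hc : q ≤ (k:ℕ) - 1
    · rw [if_pos hc, if_pos (show q + 1 ≤ (k:ℕ) by omega)]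
      congr 1
      omega
    · rw [if_neg hc, if_neg (show ¬(q + 1 ≤ (k:ℕ)) by omega)]

theorem np_shift {n : ℕ} (d : ℕ) (hn : 0 < n) (a : Fin n → K[X]) (ℓ : Fin (n*(d+1)))
    (hnp : ¬ Pivotal (coefA d hn a) ℓ) (hlt : (ℓ:ℕ) + n < n*(d+1)) :
    ¬ Pivotal (coefA d hn a) ⟨(ℓ:ℕ)+n, hlt⟩ := by
  simp only [Pivotal, not_not] at hnp ⊢
  have hsub : shiftMap (2*d+1) ''
      ((fun r : Fin (n*(d+1)) => fun k => coefA d hn a k r) '' {r | r < ℓ})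
      ⊆ (fun r : Fin (n*(d+1)) => fun k => coefA d hn a k r) ''
        {r | r < (⟨(ℓ:ℕ)+n, hlt⟩ : Fin (n*(d+1)))} := by
    rintro _ ⟨_, ⟨r, hrℓ, rfl⟩, rfl⟩
    have hrn : (r:ℕ) + n < n*(d+1) := by
      have : (r:ℕ) < (ℓ:ℕ) := hrℓ
      omega
    refine ⟨⟨(r:ℕ)+n, hrn⟩, ?_, (shiftMap_col d hn a r hrn).symm⟩
    show ((r:ℕ)+n) < (ℓ:ℕ)+n
    have : (r:ℕ) < (ℓ:ℕ) := hrℓ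
    omega
  have h2 : shiftMap (2*d+1) (fun k => coefA d hn a k ℓ)
      ∈ Submodule.span K (shiftMap (2*d+1) ''
        ((fun r : Fin (n*(d+1)) => fun k => coefA d hn a k r) '' {r | r < ℓ})) := by
    rw [← Submodule.map_span]
    exact Submodule.mem_map_of_mem hnp
  rw [shiftMap_col d hn a ℓ hlt] at h2
  exact Submodule.span_mono hsub h2

theorem np_iter {n : ℕ} (d : ℕ) (hn : 0 < n) (a : Fin n → K[X]) (t : ℕ) :
    ∀ (r : Fin (n*(d+1))), ¬ Pivotal (coefA d hn a) r →
      ∀ (h : (r:ℕ) + t*n < n*(d+1)), ¬ Pivotal (coefA d hn a) ⟨(r:ℕ)+t*n, h⟩ := by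
  induction t with
  | zero =>
    intro r hr h
    have : (⟨(r:ℕ)+0*n, h⟩ : Fin (n*(d+1))) = r := Fin.ext (by show (r:ℕ)+0*n = (r:ℕ); omega)
    rw [this]
    exact hr
  | succ t IH =>
    intro r hr h
    have h1 : (r:ℕ) + t*n < n*(d+1) := by
      have : (r:ℕ) + (t+1)*n = ((r:ℕ) + t*n) + n := by ring
      omega
    have h2 : ((⟨(r:ℕ)+t*n, h1⟩ : Fin (n*(d+1))) : ℕ) + n < n*(d+1) := by
      show ((r:ℕ) + t*n) + n < n*(d+1)
      have : (r:ℕ) + (t+1)*n = ((r:ℕ) + t*n) + n := by ring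
      omega
    have h3 := np_shift d hn a ⟨(r:ℕ)+t*n, h1⟩ (IH r hr h1) h2
    have h4 : (⟨(r:ℕ)+(t+1)*n, h⟩ : Fin (n*(d+1)))
        = ⟨((⟨(r:ℕ)+t*n, h1⟩ : Fin (n*(d+1))) : ℕ)+n, h2⟩ := Fin.ext (by show _ = ((r:ℕ)+t*n)+n; ring)
    rw [h4]
    exact h3

/-- Shift a flat vector by one block of size `n` (corresponds to multiplication by `X`). -/
def shiftv {n d : ℕ} (u : Fin (n*(d+1)) → K) : Fin (n*(d+1)) → K :=
  fun ℓ => if h : n ≤ (ℓ:ℕ) then u ⟨(ℓ:ℕ) - n, by omega⟩ else 0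

theorem flat_shiftv {n d : ℕ} (hn : 0 < n) (u : Fin (n*(d+1)) → K)
    (hu : ∀ ℓ : Fin (n*(d+1)), n*d ≤ (ℓ:ℕ) → u ℓ = 0) :
    flatv d (shiftv u) = (X : K[X]) • flatv d u := by
  have hblock : ∀ t : ℕ, t ≤ d → ∀ i : Fin n, (i:ℕ) + t*n < n*(d+1) := by
    intro t ht i
    calc (i:ℕ) + t*n < n + t*n := Nat.add_lt_add_right i.isLt _
      _ = n * (t+1) := by ring
      _ ≤ n * (d+1) := Nat.mul_le_mul le_rfl (by omega)
  funext i
  rw [Pi.smul_apply, smul_eq_mul, flatv_eq, flatv_eq, Finset.mul_sum]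
  rw [Finset.sum_range_succ' (fun t => C (vAt (shiftv u) ((i:ℕ)+t*n)) * X ^ t) d]
  rw [Finset.sum_range_succ (fun t => X * (C (vAt u ((i:ℕ)+t*n)) * X ^ t)) d]
  have h0 : vAt (shiftv u) ((i:ℕ) + 0*n) = 0 := by
    rw [vAt, dif_pos (hblock 0 (by omega) i)]
    show (if h : n ≤ (i:ℕ) + 0*n then _ else 0) = 0
    rw [dif_neg (by have := i.isLt; omega)]
  have hd0 : vAt u ((i:ℕ) + d*n) = 0 := by
    rw [vAt, dif_pos (hblock d le_rfl i)]
    refine hu _ ?_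
    show n*d ≤ (i:ℕ) + d*n
    have : n*d = d*n := Nat.mul_comm _ _
    omega
  rw [h0, hd0]
  simp only [map_zero, zero_mul, mul_zero, add_zero]
  refine Finset.sum_congr rfl fun t ht => ?_
  rw [Finset.mem_range] at ht
  have hlt1 : (i:ℕ)+(t+1)*n < n*(d+1) := hblock (t+1) (by omega) i
  have hlt2 : (i:ℕ)+t*n < n*(d+1) := hblock t (by omega) i
  have hsh : vAt (shiftv u) ((i:ℕ)+(t+1)*n) = vAt u ((i:ℕ)+t*n) := by
    rw [vAt, vAt, dif_pos hlt1, dif_pos hlt2]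
    have harith : (i:ℕ)+(t+1)*n = ((i:ℕ)+t*n)+n := by ring
    show (if h : n ≤ (i:ℕ)+(t+1)*n then u ⟨(i:ℕ)+(t+1)*n - n, by omega⟩ else 0) = _
    rw [dif_pos (by omega)]
    exact congrArg u (Fin.ext (by show (i:ℕ)+(t+1)*n - n = (i:ℕ)+t*n; omega))
  rw [hsh]
  ring

theorem flatB_mem {n d : ℕ} (hn : 0 < n) (a : Fin n → K[X]) (hd : vdeg a = d)
    (B : Fin (n*(d+1)) → Fin (n*(d+1)) → K) (hB : IsEchelonNull (coefA d hn a) B) :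
    ∀ i : Fin (n*(d+1)), ¬ Pivotal (coefA d hn a) i →
      flatv d (B i) ∈ Submodule.span K[X]
        {h : Fin n → K[X] | ∃ r, BasicNP n (coefA d hn a) r ∧ h = flatv d (B r)} := by
  have hNd : n*(d+1) = n*d + n := by ring
  suffices H : ∀ m : ℕ, ∀ i : Fin (n*(d+1)), (i:ℕ) < m → ¬ Pivotal (coefA d hn a) i →
      flatv d (B i) ∈ Submodule.span K[X]
        {h : Fin n → K[X] | ∃ r, BasicNP n (coefA d hn a) r ∧ h = flatv d (B r)} by
    exact fun i hi => H ((i:ℕ)+1) i (Nat.lt_succ_self _) hi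
  intro m
  induction m with
  | zero => exact fun i hi => absurd hi (Nat.not_lt_zero _)
  | succ m IH =>
    intro i him hnpi
    by_cases him' : (i:ℕ) < m
    · exact IH i him' hnpi
    have him2 : (i:ℕ) = m := by omega
    by_cases hb : BasicNP n (coefA d hn a) i
    · exact Submodule.subset_span ⟨i, hb, rfl⟩
    -- not basic: find a smaller non-pivotal index in the same residue class
    rw [BasicNP] at hb
    push_neg at hb
    obtain ⟨r', hr'np, hr'mod, hr'lt⟩ := hb hnpi
    have hr'lt' : (r':ℕ) < (i:ℕ) := hr'lt
    have hdvd : n ∣ ((i:ℕ) - (r':ℕ)) :=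
      (Nat.modEq_iff_dvd' (le_of_lt hr'lt')).mp hr'mod
    obtain ⟨k, hk⟩ := hdvd
    have hik : (i:ℕ) = n * k + (r':ℕ) := (Nat.sub_eq_iff_eq_add (le_of_lt hr'lt')).mp hk
    have hk1 : 1 ≤ k := by
      rcases Nat.eq_zero_or_pos k with h | h
      · rw [h, Nat.mul_zero] at hik; omega
      · exact h
    obtain ⟨k', rfl⟩ : ∃ k', k = k' + 1 := ⟨k - 1, by omega⟩
    have hmul1 : n * (k'+1) = k'*n + n := by ring
    have hik' : (i:ℕ) = (r':ℕ) + k'*n + n := by omega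
    have hjlt : (r':ℕ) + k'*n < n*(d+1) := by
      have := i.isLt; omega
    set j : Fin (n*(d+1)) := ⟨(r':ℕ) + k'*n, hjlt⟩ with hjdef
    have hjval : (j:ℕ) = (r':ℕ) + k'*n := rfl
    have hnpj : ¬ Pivotal (coefA d hn a) j := np_iter d hn a k' r' hr'np hjlt
    have hin : n ≤ (i:ℕ) := by omega
    have hjtop : (j:ℕ) < n*d := by
      have := i.isLt; omega
    have htop : ∀ ℓ : Fin (n*(d+1)), n*d ≤ (ℓ:ℕ) → B j ℓ = 0 := by
      intro ℓ hℓ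
      refine (hB j hnpj).2.2 ℓ (Fin.ne_of_val_ne (by omega)) ?_
      rintro ⟨-, hlt⟩
      have : (ℓ:ℕ) < (j:ℕ) := hlt
      omega
    have hflatw : flatv d (shiftv (B j)) = (X : K[X]) • flatv d (B j) :=
      flat_shiftv hn (B j) htop
    have hBjsyz : flatv d (B j) ∈ syz a :=
      (mulVec_eq_zero_iff hn a hd (B j)).mp (hB j hnpj).1
    have hwsyz : flatv d (shiftv (B j)) ∈ syz a := by
      rw [hflatw]; exact Submodule.smul_mem _ X hBjsyz
    have hAw : (coefA d hn a).mulVec (shiftv (B j)) = 0 :=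
      (mulVec_eq_zero_iff hn a hd (shiftv (B j))).mpr hwsyz
    set w : Fin (n*(d+1)) → K := shiftv (B j) with hwdef
    have hAu : (coefA d hn a).mulVec (B i - w) = 0 := by
      rw [Matrix.mulVec_sub, hAw, (hB i hnpi).1, sub_self]
    have hdecomp := ker_decomp (coefA d hn a) B hB (B i - w) hAu
    have hspan : flatv d (B i - w) ∈ Submodule.span K[X]
        {h : Fin n → K[X] | ∃ r, BasicNP n (coefA d hn a) r ∧ h = flatv d (B r)} := by
      rw [hdecomp, flatv_sum]
      refine Submodule.sum_mem _ fun i' hi' => ?_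
      have hnpi' : ¬ Pivotal (coefA d hn a) i' := (Finset.mem_filter.mp hi').2
      rw [flatv_smul]
      by_cases hi'lt : (i':ℕ) < (i:ℕ)
      · exact Submodule.smul_mem _ _ (IH i' (by omega) hnpi')
      · have hwi' : w i' = B j ⟨(i':ℕ) - n, by omega⟩ := by
          rw [hwdef]
          show (if h : n ≤ (i':ℕ) then B j ⟨(i':ℕ) - n, by omega⟩ else 0) = _
          rw [dif_pos (by omega)]
        have hu0 : (B i - w) i' = 0 := by
          rw [Pi.sub_apply, hwi']
          by_cases hii' : i' = i
          · have hival : (i':ℕ) = (i:ℕ) := congrArg Fin.val hii'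
            have hji : (⟨(i':ℕ) - n, by omega⟩ : Fin (n*(d+1))) = j := by
              refine Fin.ext ?_
              show (i':ℕ) - n = (r':ℕ) + k'*n
              omega
            rw [hji, hii', (hB i hnpi).2.1, (hB j hnpj).2.1, sub_self]
          · have hi'gt : (i:ℕ) < (i':ℕ) := by
              rcases Nat.lt_or_ge (i:ℕ) (i':ℕ) with h | h
              · exact h
              · exact absurd (Fin.ext (by omega) : i' = i) hii'
            have h1 : B i i' = 0 := by
              refine (hB i hnpi).2.2 i' hii' ?_
              rintro ⟨-, hlt⟩
              have : (i':ℕ) < (i:ℕ) := hlt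
              omega
            have h2 : B j ⟨(i':ℕ) - n, by omega⟩ = 0 := by
              refine (hB j hnpj).2.2 _ (Fin.ne_of_val_ne (by show (i':ℕ) - n ≠ (j:ℕ); omega)) ?_
              rintro ⟨-, hlt⟩
              have : (i':ℕ) - n < (j:ℕ) := hlt
              omega
            rw [h1, h2, sub_self]
        rw [hu0, map_zero, zero_smul]
        exact Submodule.zero_mem _
    have hfin : flatv d (B i) = flatv d (B i - w) + flatv d w := by
      have h1 : flatv d (B i - w) = flatv d (B i) - flatv d w :=
        map_sub (flatL d) (B i) w
      rw [h1, sub_add_cancel]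
    rw [hfin]
    refine Submodule.add_mem _ hspan ?_
    rw [hwdef, hflatw]
    exact Submodule.smul_mem _ X (IH j (by omega) hnpj)

theorem syz_low_deg_mem {n d : ℕ} (hn : 0 < n) (a : Fin n → K[X]) (hd : vdeg a = d)
    (B : Fin (n*(d+1)) → Fin (n*(d+1)) → K) (hB : IsEchelonNull (coefA d hn a) B)
    (h : Fin n → K[X]) (hsyz : h ∈ syz a) (hdeg : vdeg h ≤ d) :
    h ∈ Submodule.span K[X]
      {g : Fin n → K[X] | ∃ r, BasicNP n (coefA d hn a) r ∧ g = flatv d (B r)} := by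
  set v : Fin (n*(d+1)) → K :=
    fun ℓ => (h ⟨(ℓ:ℕ)%n, Nat.mod_lt _ hn⟩).coeff ((ℓ:ℕ)/n) with hvdef
  have hblock : ∀ t : ℕ, t ≤ d → ∀ i : Fin n, (i:ℕ) + t*n < n*(d+1) := by
    intro t ht i
    calc (i:ℕ) + t*n < n + t*n := Nat.add_lt_add_right i.isLt _
      _ = n * (t+1) := by ring
      _ ≤ n * (d+1) := Nat.mul_le_mul le_rfl (by omega)
  have hflat : flatv d v = h := by
    funext i
    rw [flatv_eq]
    have hterm : ∀ t ∈ Finset.range (d+1),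
        C (vAt v ((i:ℕ)+t*n)) * X^t = Polynomial.monomial t ((h i).coeff t) := by
      intro t ht
      rw [Finset.mem_range] at ht
      have hlt : (i:ℕ)+t*n < n*(d+1) := hblock t (by omega) i
      have hval : vAt v ((i:ℕ)+t*n) = (h i).coeff t := by
        rw [vAt, dif_pos hlt]
        show (h ⟨((i:ℕ)+t*n)%n, _⟩).coeff (((i:ℕ)+t*n)/n) = (h i).coeff t
        have hmod : ((i:ℕ) + t*n) % n = (i:ℕ) := by
          rw [Nat.add_mul_mod_self_right, Nat.mod_eq_of_lt i.isLt]
        have hdiv : ((i:ℕ) + t*n) / n = t := by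
          rw [Nat.add_mul_div_right _ _ hn, Nat.div_eq_of_lt i.isLt, Nat.zero_add]
        have hidx : (⟨((i:ℕ)+t*n)%n, Nat.mod_lt _ hn⟩ : Fin n) = i := Fin.ext hmod
        rw [hdiv, hidx]
      rw [hval, Polynomial.C_mul_X_pow_eq_monomial]
    rw [Finset.sum_congr rfl hterm]
    exact (Polynomial.as_sum_range' (h i) (d+1)
      (Nat.lt_succ_of_le (le_trans (natDegree_le_of_vdeg h i) hdeg))).symm
  have hAv : (coefA d hn a).mulVec v = 0 :=
    (mulVec_eq_zero_iff hn a hd v).mpr (by rw [hflat]; exact hsyz)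
  have hdecomp := ker_decomp (coefA d hn a) B hB v hAv
  rw [← hflat, hdecomp, flatv_sum]
  refine Submodule.sum_mem _ fun i' hi' => ?_
  rw [flatv_smul]
  exact Submodule.smul_mem _ _
    (flatB_mem hn a hd B hB i' (Finset.mem_filter.mp hi').2)

end Aux

/-- Lemma: the basic row-echelon syzygies generate.  The syzygy module
`syz a` is generated as a `K[s]`-module by the row-echelon syzygies `b_r^♭` for `r`
ranging over the basic non-pivotal indices of the coefficient matrix `A`. -/
theorem syz_generated_by_basic_row_echelon_syzygies {K : Type*} [Field K] {n : ℕ}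
    (hn : 1 < n) (a : Fin n → K[X]) (ha : a ≠ 0) {d : ℕ} (hd : vdeg a = d)
    (A : Matrix (Fin (2*d+1)) (Fin (n*(d+1))) K)
    (hA : A = coefA d (Nat.zero_lt_of_lt hn) a)
    (B : Fin (n*(d+1)) → Fin (n*(d+1)) → K) (hB : IsEchelonNull A B) :
    syz a = Submodule.span K[X]
      {h : Fin n → K[X] | ∃ r : Fin (n*(d+1)), BasicNP n A r ∧ h = flatv d (B r)} := by
  subst hA
  set hn0 : 0 < n := Nat.zero_lt_of_lt hn with hn0def
  apply le_antisymm
  · -- syz ≤ span : strong induction on the degree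
    intro h hsyz
    have main : ∀ e : ℕ, ∀ h' : Fin n → K[X], h' ∈ syz a → vdeg h' ≤ e →
        h' ∈ Submodule.span K[X]
          {g : Fin n → K[X] | ∃ r, BasicNP n (coefA d hn0 a) r ∧ g = flatv d (B r)} := by
      intro e
      induction e with
      | zero =>
        intro h' hs hdeg
        exact syz_low_deg_mem hn0 a hd B hB h' hs (le_trans hdeg (Nat.zero_le d))
      | succ e IHe =>
        intro h' hs hdeg
        by_cases hc : e+1 ≤ d
        · exact syz_low_deg_mem hn0 a hd B hB h' hs (le_trans hdeg hc)
        have hde : d ≤ e := by omega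
        -- pick i0 with non-vanishing top coefficient
        obtain ⟨i0, hc0ne⟩ : ∃ i0, (a i0).coeff d ≠ 0 := by
          have hne : ∃ i1, a i1 ≠ 0 := by
            by_contra hq
            push_neg at hq
            exact ha (funext hq)
          obtain ⟨i1, hi1⟩ := hne
          obtain ⟨i2, -, hi2⟩ := Finset.exists_mem_eq_sup Finset.univ
            ⟨i1, Finset.mem_univ i1⟩ (fun i => (a i).natDegree)
          by_cases h20 : a i2 = 0
          · have hd0 : d = 0 := by
              rw [← hd]
              show Finset.univ.sup (fun i => (a i).natDegree) = 0
              rw [hi2, h20, Polynomial.natDegree_zero]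
            refine ⟨i1, ?_⟩
            have hnd1 : (a i1).natDegree = 0 :=
              Nat.le_antisymm (by rw [← hd0, ← hd]; exact natDegree_le_of_vdeg a i1)
                (Nat.zero_le _)
            rw [hd0, ← hnd1]
            exact Polynomial.leadingCoeff_ne_zero.mpr hi1
          · refine ⟨i2, ?_⟩
            have hnd2 : (a i2).natDegree = d := by
              rw [← hd]
              exact (show vdeg a = (a i2).natDegree from hi2).symm
            rw [← hnd2]
            exact Polynomial.leadingCoeff_ne_zero.mpr h20
        set c0 : K := (a i0).coeff d with hc0def
        set u : Fin n → K := fun t => (h' t).coeff (e+1) with hudef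
        set q : K[X] := ∑ i, C (u i) * a i with hqdef
        have hdegs : ∀ i, (a i).natDegree ≤ d := fun i => hd ▸ natDegree_le_of_vdeg a i
        have hdegh : ∀ t, (h' t).natDegree ≤ e+1 :=
          fun t => le_trans (natDegree_le_of_vdeg h' t) hdeg
        have horth : q.coeff d = 0 := by
          have h0 : (∑ i, a i * h' i).coeff (d+(e+1)) = 0 := by
            rw [(mem_syz_iff a h').mp hs, Polynomial.coeff_zero]
          rw [Polynomial.finset_sum_coeff] at h0
          rw [hqdef, Polynomial.finset_sum_coeff]
          calc ∑ i, (C (u i) * a i).coeff d = ∑ i, u i * (a i).coeff d :=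
              Finset.sum_congr rfl fun i _ => Polynomial.coeff_C_mul _
          _ = ∑ i, (a i * h' i).coeff (d+(e+1)) := by
              refine Finset.sum_congr rfl fun i _ => ?_
              rw [Polynomial.coeff_mul_add_eq_of_natDegree_le (hdegs i) (hdegh i)]
              ring
          _ = 0 := h0
        set g : Fin n → K[X] :=
          fun t => C c0⁻¹ * (C (u t) * a i0 - if t = i0 then q else 0) with hgdef
        have hgsyz : g ∈ syz a := by
          rw [mem_syz_iff]
          have h1 : ∀ t : Fin n, a t * g t
              = C c0⁻¹ * (a t * (C (u t) * a i0))
                - C c0⁻¹ * (if t = i0 then a t * q else 0) := by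
            intro t
            show a t * (C c0⁻¹ * (C (u t) * a i0 - if t = i0 then q else 0)) = _
            by_cases hti : t = i0
            · rw [if_pos hti, if_pos hti]; ring
            · rw [if_neg hti, if_neg hti]; ring
          rw [Finset.sum_congr rfl (fun t _ => h1 t), Finset.sum_sub_distrib,
            ← Finset.mul_sum, ← Finset.mul_sum]
          have h2 : ∑ t : Fin n, (if t = i0 then a t * q else 0) = a i0 * q := by
            rw [Finset.sum_ite_eq' Finset.univ i0 (fun t => a t * q),
              if_pos (Finset.mem_univ i0)]
          have h3 : ∑ t : Fin n, a t * (C (u t) * a i0) = q * a i0 := by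
            rw [hqdef, Finset.sum_mul]
            exact Finset.sum_congr rfl fun t _ => by ring
          rw [h2, h3]
          ring
        have hqd : q.natDegree ≤ d := by
          rw [hqdef]
          refine Polynomial.natDegree_sum_le_of_forall_le _ _ fun i _ => ?_
          refine le_trans Polynomial.natDegree_mul_le ?_
          rw [Polynomial.natDegree_C, Nat.zero_add]
          exact hdegs i
        have hgdeg : vdeg g ≤ d := by
          show Finset.univ.sup (fun t => (g t).natDegree) ≤ d
          refine Finset.sup_le fun t _ => ?_
          show (C c0⁻¹ * (C (u t) * a i0 - if t = i0 then q else 0)).natDegree ≤ d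
          refine le_trans Polynomial.natDegree_mul_le ?_
          rw [Polynomial.natDegree_C, Nat.zero_add]
          refine le_trans (Polynomial.natDegree_sub_le _ _) ?_
          refine max_le ?_ ?_
          · refine le_trans Polynomial.natDegree_mul_le ?_
            rw [Polynomial.natDegree_C, Nat.zero_add]
            exact hdegs i0
          · by_cases hti : t = i0
            · rw [if_pos hti]; exact hqd
            · rw [if_neg hti, Polynomial.natDegree_zero]; exact Nat.zero_le _
        have hgcoeff : ∀ t, (g t).coeff d = u t := by
          intro t
          show (C c0⁻¹ * (C (u t) * a i0 - if t = i0 then q else 0)).coeff d = u t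
          rw [Polynomial.coeff_C_mul, Polynomial.coeff_sub, Polynomial.coeff_C_mul]
          have hite : ((if t = i0 then q else 0) : K[X]).coeff d = 0 := by
            split_ifs with hti
            · exact horth
            · exact Polynomial.coeff_zero d
          rw [hite, sub_zero, ← hc0def, mul_comm (u t) c0, ← mul_assoc,
            inv_mul_cancel₀ hc0ne, one_mul]
        set h'' : Fin n → K[X] := h' - ((X:K[X])^(e+1-d)) • g with hh''def
        have hsub : h'' ∈ syz a := Submodule.sub_mem _ hs (Submodule.smul_mem _ _ hgsyz)
        have hdeg'' : vdeg h'' ≤ e := by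
          show Finset.univ.sup (fun t => (h'' t).natDegree) ≤ e
          refine Finset.sup_le fun t _ => ?_
          refine Polynomial.natDegree_le_iff_coeff_eq_zero.mpr fun k hk => ?_
          show (h' t - ((X:K[X])^(e+1-d)) • g t).coeff k = 0
          rw [Polynomial.coeff_sub, smul_eq_mul, mul_comm, Polynomial.coeff_mul_X_pow',
            if_pos (by omega : e+1-d ≤ k)]
          by_cases hke : k = e+1
          · subst hke
            have harith : e+1 - (e+1-d) = d := by omega
            rw [harith, hgcoeff t]
            exact sub_self _
          · have hk2 : e+1 < k := by omega
            rw [Polynomial.coeff_eq_zero_of_natDegree_lt (lt_of_le_of_lt (hdegh t) hk2),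
              Polynomial.coeff_eq_zero_of_natDegree_lt
                (show (g t).natDegree < k - (e+1-d) from
                  lt_of_le_of_lt (le_trans (natDegree_le_of_vdeg g t) hgdeg) (by omega)),
              sub_zero]
        have hmem'' := IHe h'' hsub hdeg''
        have hrepr : h' = h'' + ((X:K[X])^(e+1-d)) • g := by
          rw [hh''def, sub_add_cancel]
        rw [hrepr]
        exact Submodule.add_mem _ hmem''
          (Submodule.smul_mem _ _ (syz_low_deg_mem hn0 a hd B hB g hgsyz hgdeg))
    exact main (vdeg h) h hsyz le_rfl
  · rw [Submodule.span_le]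
    rintro x ⟨r, hr, rfl⟩
    exact (mulVec_eq_zero_iff hn0 a hd (B r)).mp (hB r hr.1).1
end
end
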